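/- arXiv:quant-ph/0002041 — 2 statements merged into one kernel-verified Lean document; each statement's English description precedes it below -/
import Mathlib

section
/- Let γ^t = (γ_q^t, γ_p^t) solve the magnetic Hamilton equations γ̇_q = ∂H/∂p(γ), γ̇_p = -∂H/∂q(γ) - F(γ_q) ∂H/∂p(γ) with γ⁰ = x⁰ = (q⁰, p⁰). Define X(x⁰,t) = (1/2)(γ^t + x⁰) + v^t and Y(x⁰,t) = J(γ^t - x⁰) + y^t, where v^t = (0; (1/2)(A(γ_q^t, q⁰) + A(q⁰, γ_q^t))), y^t = (A(γ_q^t, q⁰) - A(q⁰, γ_q^t); 0), J = [[0,I],[-I,0]], and A is the Valatin potential of F. Then (X, Y) solves the Hamiltonian system Ẋ = ∂H₀/∂Y, Ẏ = -∂H₀/∂X with H₀(x,y) = H(l(x,y)), X(0) = x⁰, Y(0) = 0, where l is the left groupoid map l_q = x_q - y_p/2, l_p = x_p + y_q/2 - A(l_q, r_q), r_q = x_q + y_p/2. -/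
open MeasureTheory intervalIntegral

/-- Left groupoid map `l(x,y)` on `T*(T*ℝⁿ)` built from the Valatin potential `A`. -/
noncomputable def lmap {n : ℕ} (A : Fin n → (Fin n → ℝ) → (Fin n → ℝ) → ℝ)
    (x y : (Fin n → ℝ) × (Fin n → ℝ)) : (Fin n → ℝ) × (Fin n → ℝ) :=
  (x.1 - (1/2 : ℝ) • y.2,
    fun j => x.2 j + (1/2) * y.1 j
      - A j (x.1 - (1/2 : ℝ) • y.2) (x.1 + (1/2 : ℝ) • y.2))

/-- `X(x⁰,t) = (1/2)(γ^t + x⁰) + v^t` with the magnetic anomaly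
`v^t = (0; (1/2)(A(γ_q^t,q⁰) + A(q⁰,γ_q^t)))`. -/
noncomputable def Xdyn {n : ℕ} (A : Fin n → (Fin n → ℝ) → (Fin n → ℝ) → ℝ)
    (γ : ℝ → (Fin n → ℝ) × (Fin n → ℝ)) (x0 : (Fin n → ℝ) × (Fin n → ℝ)) (t : ℝ) :
    (Fin n → ℝ) × (Fin n → ℝ) :=
  ((1/2 : ℝ) • ((γ t).1 + x0.1),
    fun j => (1/2) * ((γ t).2 j + x0.2 j)
      + (1/2) * (A j (γ t).1 x0.1 + A j x0.1 (γ t).1))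

/-- `Y(x⁰,t) = J(γ^t - x⁰) + y^t` with `J = [[0,I],[-I,0]]` and
`y^t = (A(γ_q^t,q⁰) - A(q⁰,γ_q^t); 0)`. -/
noncomputable def Ydyn {n : ℕ} (A : Fin n → (Fin n → ℝ) → (Fin n → ℝ) → ℝ)
    (γ : ℝ → (Fin n → ℝ) × (Fin n → ℝ)) (x0 : (Fin n → ℝ) × (Fin n → ℝ)) (t : ℝ) :
    (Fin n → ℝ) × (Fin n → ℝ) :=
  (fun j => ((γ t).2 j - x0.2 j) + (A j (γ t).1 x0.1 - A j x0.1 (γ t).1),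
    fun j => -((γ t).1 j - x0.1 j))

namespace MagAux

/-- Differentiation under the interval integral sign for a smooth integrand. -/
lemma paramHasFDerivAt {G : Type*} [NormedAddCommGroup G] [NormedSpace ℝ G]
    [FiniteDimensional ℝ G]
    (g : G × ℝ → ℝ) (hg : ContDiff ℝ (⊤ : ℕ∞) g) (z₀ : G) :
    HasFDerivAt (fun z => ∫ t in (0:ℝ)..1, g (z, t))
      (∫ t in (0:ℝ)..1, (fderiv ℝ g (z₀, t)).comp (ContinuousLinearMap.inl ℝ G ℝ)) z₀ := by
  have hgd : Differentiable ℝ g := hg.differentiable (by simp)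
  have hslice : ∀ (x : G) (t : ℝ), HasFDerivAt (fun z => g (z, t))
      ((fderiv ℝ g (x, t)).comp (ContinuousLinearMap.inl ℝ G ℝ)) x := by
    intro x t
    have h1 : HasFDerivAt (fun z : G => (z, t)) (ContinuousLinearMap.inl ℝ G ℝ) x :=
      hasFDerivAt_prodMk_left x t
    exact (hgd (x, t)).hasFDerivAt.comp x h1
  -- compactness bound
  have hfc : Continuous fun p : G × ℝ => ‖fderiv ℝ g p‖ :=
    (hg.continuous_fderiv (by simp)).norm
  obtain ⟨p₀, hp₀, hM⟩ : ∃ p₀ ∈ (Metric.closedBall z₀ 1 ×ˢ Set.Icc (0:ℝ) 1),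
      ∀ p ∈ (Metric.closedBall z₀ 1 ×ˢ Set.Icc (0:ℝ) 1),
        ‖fderiv ℝ g p‖ ≤ ‖fderiv ℝ g p₀‖ := by
    obtain ⟨p₀, hp₀, hmax⟩ := IsCompact.exists_isMaxOn
      ((isCompact_closedBall z₀ 1).prod (isCompact_Icc : IsCompact (Set.Icc (0:ℝ) 1)))
      ⟨(z₀, 0), Set.mem_prod.2 ⟨Metric.mem_closedBall_self (by norm_num), by norm_num [Set.mem_Icc]⟩⟩ hfc.continuousOn
    exact ⟨p₀, hp₀, fun p hp => hmax hp⟩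
  set M : ℝ := ‖fderiv ℝ g p₀‖ * ‖ContinuousLinearMap.inl ℝ G ℝ‖ with hMdef
  have key := intervalIntegral.hasFDerivAt_integral_of_dominated_of_fderiv_le
    (F := fun z t => g (z, t))
    (F' := fun z t => (fderiv ℝ g (z, t)).comp (ContinuousLinearMap.inl ℝ G ℝ))
    (x₀ := z₀) (a := (0:ℝ)) (b := 1) (μ := volume) (bound := fun _ => M)
    (s := Metric.ball z₀ 1) (Metric.ball_mem_nhds z₀ one_pos)
    ?_ ?_ ?_ ?_ ?_ ?_
  · exact key
  · filter_upwards with x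
    exact ((hg.continuous.comp (by fun_prop : Continuous fun t : ℝ => (x, t)))).aestronglyMeasurable
  · exact ((hg.continuous.comp (by fun_prop : Continuous fun t : ℝ => (z₀, t)))).intervalIntegrable 0 1
  · apply Continuous.aestronglyMeasurable
    have : Continuous fun t : ℝ => fderiv ℝ g (z₀, t) :=
      (hg.continuous_fderiv (by simp)).comp (by fun_prop)
    exact (((ContinuousLinearMap.compL ℝ G (G × ℝ) ℝ).flip
      (ContinuousLinearMap.inl ℝ G ℝ)).continuous).comp this
  · filter_upwards with t ht x hx
    refine le_trans (ContinuousLinearMap.opNorm_comp_le _ _) ?_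
    refine mul_le_mul_of_nonneg_right ?_ (norm_nonneg _)
    refine hM (x, t) ?_
    constructor
    · exact Metric.ball_subset_closedBall hx
    · rw [Set.uIoc_of_le (by norm_num : (0:ℝ) ≤ 1)] at ht
      exact Set.mem_Icc_of_Ioc ht
  · exact intervalIntegrable_const
  · filter_upwards with t ht x hx
    exact hslice x t

variable {n : ℕ}

lemma sum_single_mul (f : Fin n → ℝ) (k : Fin n) :
    ∑ l, (Pi.single k (1:ℝ) : Fin n → ℝ) l * f l = f k := by
  rw [Finset.sum_eq_single k]
  · simp
  · intro l _ hl
    simp [Pi.single_apply, hl.symm]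
  · simp



lemma single_sum_mul (f : Fin n → ℝ) (k : Fin n) :
    ∑ l, f l * (Pi.single k (1:ℝ) : Fin n → ℝ) l = f k := by
  rw [Finset.sum_eq_single k]
  · simp
  · intro l _ hl
    simp [Pi.single_apply, hl.symm]
  · simp

lemma vec_decomp (v : Fin n → ℝ) :
    v = ∑ l, v l • (Pi.single l (1:ℝ) : Fin n → ℝ) := by
  funext i
  rw [Finset.sum_apply]
  rw [Finset.sum_eq_single i]
  · simp
  · intro l _ hl
    simp [Pi.single_apply, hl.symm]
  · simp

lemma fderiv_pt_decomp (f : (Fin n → ℝ) → ℝ) (q v : Fin n → ℝ) :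
    fderiv ℝ f q v = ∑ l, v l * fderiv ℝ f q (Pi.single l 1) := by
  conv_lhs => rw [vec_decomp v]
  rw [map_sum]
  simp [_root_.map_smul, smul_eq_mul]

lemma clm_dirsum (L : ((Fin n → ℝ) × (Fin n → ℝ)) →L[ℝ] ℝ) (u w : Fin n → ℝ) :
    L (u, w) = ∑ k, u k * L (Pi.single k 1, 0) + ∑ k, w k * L (0, Pi.single k 1) := by
  have hd : (u, w) = (∑ k, u k • ((Pi.single k (1:ℝ), (0:Fin n → ℝ)) :
        (Fin n → ℝ) × (Fin n → ℝ)))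
      + ∑ k, w k • (((0:Fin n → ℝ), Pi.single k (1:ℝ)) : (Fin n → ℝ) × (Fin n → ℝ)) := by
    refine Prod.ext ?_ ?_ <;>
      simp only [Prod.fst_add, Prod.snd_add, Prod.fst_sum, Prod.snd_sum, Prod.smul_fst,
        Prod.smul_snd, smul_zero, Finset.sum_const_zero, add_zero, zero_add]
    · exact vec_decomp u
    · exact vec_decomp w
  rw [hd, map_add, map_sum, map_sum]
  simp only [_root_.map_smul, smul_eq_mul]



/-- The integrand of the Valatin potential, as a jointly smooth function. -/
noncomputable def gfun (F : Fin n → Fin n → (Fin n → ℝ) → ℝ) (j : Fin n) :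
    ((Fin n → ℝ) × (Fin n → ℝ)) × ℝ → ℝ :=
  fun p => p.2 * ∑ k, F j k (p.1.2 + p.2 • (p.1.1 - p.1.2)) * (p.1.1 k - p.1.2 k)

lemma gfun_smooth (F : Fin n → Fin n → (Fin n → ℝ) → ℝ)
    (hF : ∀ j k, ContDiff ℝ (⊤ : ℕ∞) (F j k)) (j : Fin n) : ContDiff ℝ (⊤ : ℕ∞) (gfun F j) := by
  unfold gfun
  have hc : ContDiff ℝ (⊤ : ℕ∞) (fun p : ((Fin n → ℝ) × (Fin n → ℝ)) × ℝ =>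
      p.1.2 + p.2 • (p.1.1 - p.1.2)) := by fun_prop
  apply ContDiff.mul (by fun_prop)
  apply ContDiff.sum
  intro k _
  exact ((hF j k).comp hc).mul (by fun_prop)

/-- Line derivative helper. -/
lemma hasDerivAt_line {G : Type*} [NormedAddCommGroup G] [NormedSpace ℝ G]
    (p v : G) : HasDerivAt (fun s : ℝ => p + s • v) v 0 := by
  simpa using (((hasDerivAt_id (0:ℝ)).smul_const v).const_add p)

lemma fderiv_dir {G : Type*} [NormedAddCommGroup G] [NormedSpace ℝ G]
    {f : G → ℝ} {p : G} (hf : DifferentiableAt ℝ f p) (v : G) :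
    HasDerivAt (fun s : ℝ => f (p + s • v)) (fderiv ℝ f p v) 0 := by
  have hp : p + (0:ℝ) • v = p := by simp
  have hfd : HasFDerivAt f (fderiv ℝ f p) (p + (0:ℝ) • v) := by
    rw [hp]; exact hf.hasFDerivAt
  have h := hfd.comp_hasDerivAt 0 (hasDerivAt_line p v)
  exact h

/-- Directional derivative of `gfun` in the space variable. -/
lemma gfun_dir (F : Fin n → Fin n → (Fin n → ℝ) → ℝ)
    (hF : ∀ j k, ContDiff ℝ (⊤ : ℕ∞) (F j k)) (j : Fin n)
    (z v : (Fin n → ℝ) × (Fin n → ℝ)) (t : ℝ) :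
    HasDerivAt (fun s : ℝ => gfun F j (z + s • v, t))
      (t * ∑ k, (fderiv ℝ (F j k) (z.2 + t • (z.1 - z.2)) (v.2 + t • (v.1 - v.2))
          * (z.1 k - z.2 k)
        + F j k (z.2 + t • (z.1 - z.2)) * (v.1 k - v.2 k))) 0 := by
  set c := z.2 + t • (z.1 - z.2) with hc
  set w := v.2 + t • (v.1 - v.2) with hw
  have hkey : ∀ s : ℝ, gfun F j (z + s • v, t)
      = t * ∑ k, F j k (c + s • w) * ((z.1 k - z.2 k) + s * (v.1 k - v.2 k)) := by
    intro s
    unfold gfun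
    congr 1
    apply Finset.sum_congr rfl
    intro k _
    congr 1
    · congr 1
      simp only [hc, hw, Prod.fst_add, Prod.snd_add, Prod.smul_fst, Prod.smul_snd]
      module
    · simp [Prod.fst_add, Prod.snd_add]; ring
  rw [funext hkey]
  apply HasDerivAt.const_mul
  apply HasDerivAt.fun_sum
  intro k _
  have h1 : HasDerivAt (fun s : ℝ => F j k (c + s • w)) (fderiv ℝ (F j k) c w) 0 :=
    fderiv_dir ((hF j k).differentiable (by simp) c) w
  have h2 : HasDerivAt (fun s : ℝ => (z.1 k - z.2 k) + s * (v.1 k - v.2 k))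
      (v.1 k - v.2 k) 0 := by
    simpa using ((hasDerivAt_id (0:ℝ)).mul_const (v.1 k - v.2 k)).const_add (z.1 k - z.2 k)
  have := h1.fun_mul h2
  simpa using this


section Valatin

variable (F : Fin n → Fin n → (Fin n → ℝ) → ℝ)

/-- Total derivative of the (uncurried) Valatin potential integrand family. -/
noncomputable def DA (j : Fin n) (z : (Fin n → ℝ) × (Fin n → ℝ)) :
    ((Fin n → ℝ) × (Fin n → ℝ)) →L[ℝ] ℝ :=
  ∫ t in (0:ℝ)..1, (fderiv ℝ (gfun F j) (z, t)).comp
    (ContinuousLinearMap.inl ℝ ((Fin n → ℝ) × (Fin n → ℝ)) ℝ)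

/-- `∂A_j/∂x_k` (derivative in the first argument). -/
noncomputable def Pd (j k : Fin n) (x y : Fin n → ℝ) : ℝ :=
  DA F j (x, y) (Pi.single k 1, 0)

/-- `∂A_j/∂y_k` (derivative in the second argument). -/
noncomputable def Qd (j k : Fin n) (x y : Fin n → ℝ) : ℝ :=
  DA F j (x, y) (0, Pi.single k 1)

variable {F} (hF : ∀ j k, ContDiff ℝ (⊤ : ℕ∞) (F j k))
variable {A : Fin n → (Fin n → ℝ) → (Fin n → ℝ) → ℝ}
variable (hA : ∀ j (q q' : Fin n → ℝ),
  A j q q' = ∫ t in (0:ℝ)..1, t * ∑ k, F j k (q' + t • (q - q')) * (q k - q' k))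

include hF hA in
lemma hasFDerivAt_A (j : Fin n) (z : (Fin n → ℝ) × (Fin n → ℝ)) :
    HasFDerivAt (fun w : (Fin n → ℝ) × (Fin n → ℝ) => A j w.1 w.2) (DA F j z) z := by
  have he : (fun w : (Fin n → ℝ) × (Fin n → ℝ) => A j w.1 w.2)
      = fun w => ∫ t in (0:ℝ)..1, gfun F j (w, t) := by
    funext w
    rw [hA]
    rfl
  rw [he]
  exact paramHasFDerivAt _ (gfun_smooth F hF j) z

include hF in
lemma DA_apply (j : Fin n) (z v : (Fin n → ℝ) × (Fin n → ℝ)) :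
    DA F j z v = ∫ t in (0:ℝ)..1,
      t * ∑ k, (fderiv ℝ (F j k) (z.2 + t • (z.1 - z.2)) (v.2 + t • (v.1 - v.2))
          * (z.1 k - z.2 k)
        + F j k (z.2 + t • (z.1 - z.2)) * (v.1 k - v.2 k)) := by
  have hgc : Continuous (fderiv ℝ (gfun F j)) :=
    (gfun_smooth F hF j).continuous_fderiv (by simp)
  have hint : IntervalIntegrable (fun t : ℝ => (fderiv ℝ (gfun F j) (z, t)).comp
      (ContinuousLinearMap.inl ℝ ((Fin n → ℝ) × (Fin n → ℝ)) ℝ)) volume 0 1 := by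
    apply Continuous.intervalIntegrable
    exact (((ContinuousLinearMap.compL ℝ ((Fin n → ℝ) × (Fin n → ℝ))
      (((Fin n → ℝ) × (Fin n → ℝ)) × ℝ) ℝ).flip
      (ContinuousLinearMap.inl ℝ ((Fin n → ℝ) × (Fin n → ℝ)) ℝ)).continuous).comp
      (hgc.comp (by fun_prop))
  rw [DA, ContinuousLinearMap.intervalIntegral_apply hint]
  apply intervalIntegral.integral_congr
  intro t _
  simp only [ContinuousLinearMap.comp_apply, ContinuousLinearMap.inl_apply]
  -- fderiv ℝ (gfun F j) (z, t) (v, 0) equals the directional derivative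
  have hdiff : Differentiable ℝ (gfun F j) := (gfun_smooth F hF j).differentiable (by simp)
  have h1 : HasDerivAt (fun s : ℝ => gfun F j ((z, t) + s • (v, (0:ℝ))))
      (fderiv ℝ (gfun F j) (z, t) (v, 0)) 0 := fderiv_dir (hdiff (z, t)) (v, 0)
  have h2 : HasDerivAt (fun s : ℝ => gfun F j ((z, t) + s • (v, (0:ℝ))))
      (t * ∑ k, (fderiv ℝ (F j k) (z.2 + t • (z.1 - z.2)) (v.2 + t • (v.1 - v.2))
          * (z.1 k - z.2 k)
        + F j k (z.2 + t • (z.1 - z.2)) * (v.1 k - v.2 k))) 0 := by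
    have h3 := gfun_dir F hF j z v t
    have he : (fun s : ℝ => gfun F j ((z, t) + s • (v, (0:ℝ))))
        = fun s : ℝ => gfun F j (z + s • v, t) := by
      funext s
      congr 1
      simp [Prod.ext_iff]
    rw [he]
    exact h3
  exact h1.unique h2



include hF in
lemma Pd_eq (j k : Fin n) (x y : Fin n → ℝ) :
    Pd F j k x y = ∫ t in (0:ℝ)..1,
      (t^2 * ∑ l, fderiv ℝ (F j l) (y + t • (x - y)) (Pi.single k 1) * (x l - y l)
        + t * F j k (y + t • (x - y))) := by
  rw [Pd, DA_apply hF]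
  apply intervalIntegral.integral_congr
  intro t _
  simp only
  have h0 : (0:Fin n → ℝ) + t • ((Pi.single k 1 : Fin n → ℝ) - 0)
      = t • (Pi.single k (1:ℝ) : Fin n → ℝ) := by simp
  rw [h0]
  have hsum : ∀ l : Fin n,
      fderiv ℝ (F j l) (y + t • (x - y)) (t • (Pi.single k (1:ℝ) : Fin n → ℝ)) * (x l - y l)
        + F j l (y + t • (x - y)) * ((Pi.single k (1:ℝ) : Fin n → ℝ) l - (0:Fin n → ℝ) l)
      = t * (fderiv ℝ (F j l) (y + t • (x - y)) (Pi.single k 1) * (x l - y l))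
        + F j l (y + t • (x - y)) * (Pi.single k (1:ℝ) : Fin n → ℝ) l := by
    intro l
    rw [_root_.map_smul]
    simp only [smul_eq_mul, Pi.zero_apply, sub_zero]
    ring
  rw [Finset.sum_congr rfl (fun l _ => hsum l), Finset.sum_add_distrib,
    single_sum_mul (fun l => F j l (y + t • (x - y))) k, ← Finset.mul_sum]
  ring

include hF in
lemma Qd_eq (j k : Fin n) (x y : Fin n → ℝ) :
    Qd F j k x y = ∫ t in (0:ℝ)..1,
      (t * (1 - t) * ∑ l, fderiv ℝ (F j l) (y + t • (x - y)) (Pi.single k 1) * (x l - y l)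
        - t * F j k (y + t • (x - y))) := by
  rw [Qd, DA_apply hF]
  apply intervalIntegral.integral_congr
  intro t _
  simp only
  have h0 : (Pi.single k 1 : Fin n → ℝ) + t • ((0:Fin n → ℝ) - Pi.single k 1)
      = (1 - t) • (Pi.single k (1:ℝ) : Fin n → ℝ) := by
    rw [zero_sub, smul_neg, sub_smul, one_smul]
    abel
  rw [h0]
  have hsum : ∀ l : Fin n,
      fderiv ℝ (F j l) (y + t • (x - y)) ((1 - t) • (Pi.single k (1:ℝ) : Fin n → ℝ))
          * (x l - y l)
        + F j l (y + t • (x - y)) * ((0:Fin n → ℝ) l - (Pi.single k (1:ℝ) : Fin n → ℝ) l)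
      = (1 - t) * (fderiv ℝ (F j l) (y + t • (x - y)) (Pi.single k 1) * (x l - y l))
        - F j l (y + t • (x - y)) * (Pi.single k (1:ℝ) : Fin n → ℝ) l := by
    intro l
    rw [_root_.map_smul]
    simp only [smul_eq_mul, Pi.zero_apply, zero_sub]
    ring
  rw [Finset.sum_congr rfl (fun l _ => hsum l), Finset.sum_sub_distrib,
    single_sum_mul (fun l => F j l (y + t • (x - y))) k, ← Finset.mul_sum]
  ring

include hF in
lemma contDF (j l : Fin n) (x y v : Fin n → ℝ) :
    Continuous fun t : ℝ => fderiv ℝ (F j l) (y + t • (x - y)) v := by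
  exact (((hF j l).continuous_fderiv (by simp)).comp (by fun_prop)).clm_apply continuous_const

include hF in
lemma contF (j l : Fin n) (x y : Fin n → ℝ) :
    Continuous fun t : ℝ => F j l (y + t • (x - y)) :=
  ((hF j l).continuous).comp (by fun_prop)

include hF in
lemma hasDerivAt_F_line (j k : Fin n) (x y : Fin n → ℝ) (t : ℝ) :
    HasDerivAt (fun t : ℝ => F j k (y + t • (x - y)))
      (fderiv ℝ (F j k) (y + t • (x - y)) (x - y)) t := by
  have hc : HasDerivAt (fun t : ℝ => y + t • (x - y)) (x - y) t := by
    simpa using ((hasDerivAt_id t).smul_const (x - y)).const_add y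
  exact (((hF j k).differentiable (by simp) _).hasFDerivAt).comp_hasDerivAt t hc

lemma fderiv_F_anti {F : Fin n → Fin n → (Fin n → ℝ) → ℝ} (hanti : ∀ j k q, F j k q = - F k j q) (j k : Fin n) (q v : Fin n → ℝ) :
    fderiv ℝ (F k j) q v = - fderiv ℝ (F j k) q v := by
  have he : F k j = fun q => -F j k q := funext fun q => hanti k j q
  rw [he, fderiv_fun_neg]
  simp

/-- Key closedness consequence:
`∂_k F_{jl} - ∂_j F_{kl} = ∂_l F_{jk}` in directional form. -/
lemma closed_key {F : Fin n → Fin n → (Fin n → ℝ) → ℝ} (hanti : ∀ j k q, F j k q = - F k j q)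
    (hclosed : ∀ j k l (q : Fin n → ℝ),
      fderiv ℝ (F k l) q (Pi.single j 1) + fderiv ℝ (F l j) q (Pi.single k 1)
        + fderiv ℝ (F j k) q (Pi.single l 1) = 0)
    (j k l : Fin n) (c : Fin n → ℝ) :
    fderiv ℝ (F j l) c (Pi.single k 1) - fderiv ℝ (F k l) c (Pi.single j 1)
      = fderiv ℝ (F j k) c (Pi.single l 1) := by
  have h := hclosed j k l c
  have h2 := fderiv_F_anti hanti j l c (Pi.single k 1)
  linarith

include hF in
/-- Identity (I): the `x`-curl of the Valatin potential is `F`. -/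
lemma curl_Pd (hanti : ∀ j k q, F j k q = - F k j q)
    (hclosed : ∀ j k l (q : Fin n → ℝ),
      fderiv ℝ (F k l) q (Pi.single j 1) + fderiv ℝ (F l j) q (Pi.single k 1)
        + fderiv ℝ (F j k) q (Pi.single l 1) = 0)
    (j k : Fin n) (x y : Fin n → ℝ) :
    Pd F j k x y - Pd F k j x y = F j k x := by
  have hint1 : IntervalIntegrable (fun t : ℝ =>
      t^2 * ∑ l, fderiv ℝ (F j l) (y + t • (x - y)) (Pi.single k 1) * (x l - y l)
        + t * F j k (y + t • (x - y))) volume 0 1 := by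
    apply Continuous.intervalIntegrable
    refine Continuous.add (Continuous.mul (by fun_prop) ?_) (Continuous.mul (by fun_prop)
      (contF hF j k x y))
    exact continuous_finset_sum _ fun l _ => (contDF hF j l x y _).mul continuous_const
  have hint2 : IntervalIntegrable (fun t : ℝ =>
      t^2 * ∑ l, fderiv ℝ (F k l) (y + t • (x - y)) (Pi.single j 1) * (x l - y l)
        + t * F k j (y + t • (x - y))) volume 0 1 := by
    apply Continuous.intervalIntegrable
    refine Continuous.add (Continuous.mul (by fun_prop) ?_) (Continuous.mul (by fun_prop)
      (contF hF k j x y))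
    exact continuous_finset_sum _ fun l _ => (contDF hF k l x y _).mul continuous_const
  rw [Pd_eq hF, Pd_eq hF, ← intervalIntegral.integral_sub hint1 hint2]
  have hFTC : ∫ t in (0:ℝ)..1, (2 * t * F j k (y + t • (x - y))
      + t^2 * fderiv ℝ (F j k) (y + t • (x - y)) (x - y)) = F j k x := by
    have hder : ∀ t ∈ Set.uIcc (0:ℝ) 1, HasDerivAt (fun t : ℝ => t^2 * F j k (y + t • (x - y)))
        (2 * t * F j k (y + t • (x - y))
          + t^2 * fderiv ℝ (F j k) (y + t • (x - y)) (x - y)) t := by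
      intro t _
      have h1 : HasDerivAt (fun t : ℝ => t^2) (2 * t) t := by
        simpa using hasDerivAt_pow 2 t
      exact h1.mul (hasDerivAt_F_line hF j k x y t)
    have hcont : IntervalIntegrable (fun t : ℝ => 2 * t * F j k (y + t • (x - y))
        + t^2 * fderiv ℝ (F j k) (y + t • (x - y)) (x - y)) volume 0 1 := by
      apply Continuous.intervalIntegrable
      exact (Continuous.mul (by fun_prop) (contF hF j k x y)).add
        (Continuous.mul (by fun_prop) (contDF hF j k x y _))
    rw [intervalIntegral.integral_eq_sub_of_hasDerivAt hder hcont]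
    have h1 : y + (1:ℝ) • (x - y) = x := by
      rw [one_smul, add_sub_cancel]
    have h0 : y + (0:ℝ) • (x - y) = y := by simp
    rw [h1]
    ring
  conv_rhs => rw [← hFTC]
  apply intervalIntegral.integral_congr
  intro t _
  set c := y + t • (x - y) with hcdef
  have hdec : fderiv ℝ (F j k) c (x - y)
      = ∑ l, (x l - y l) * fderiv ℝ (F j k) c (Pi.single l 1) := by
    have := fderiv_pt_decomp (F j k) c (x - y)
    simpa using this
  have hterm : ∀ l : Fin n,
      fderiv ℝ (F j l) c (Pi.single k 1) * (x l - y l)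
        - fderiv ℝ (F k l) c (Pi.single j 1) * (x l - y l)
      = (x l - y l) * fderiv ℝ (F j k) c (Pi.single l 1) := by
    intro l
    linear_combination (x l - y l) * closed_key hanti hclosed j k l c
  have hsumeq : (∑ l, fderiv ℝ (F j l) c (Pi.single k 1) * (x l - y l))
      - (∑ l, fderiv ℝ (F k l) c (Pi.single j 1) * (x l - y l))
      = fderiv ℝ (F j k) c (x - y) := by
    rw [hdec, ← Finset.sum_sub_distrib]
    exact Finset.sum_congr rfl fun l _ => hterm l
  have hanti' : F k j c = - F j k c := hanti k j c
  linear_combination (t^2) * hsumeq - t * hanti'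

include hF in
/-- Identity (II): antisymmetry of the `y`-derivatives under argument swap. -/
lemma symm_Qd (hanti : ∀ j k q, F j k q = - F k j q)
    (hclosed : ∀ j k l (q : Fin n → ℝ),
      fderiv ℝ (F k l) q (Pi.single j 1) + fderiv ℝ (F l j) q (Pi.single k 1)
        + fderiv ℝ (F j k) q (Pi.single l 1) = 0)
    (j k : Fin n) (x y : Fin n → ℝ) :
    Qd F j k x y + Qd F k j y x = 0 := by
  have hflip : Qd F k j y x = ∫ t in (0:ℝ)..1,
      ((1 - t) * t * ∑ l, fderiv ℝ (F k l) (y + t • (x - y)) (Pi.single j 1) * (y l - x l)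
        - (1 - t) * F k j (y + t • (x - y))) := by
    rw [Qd_eq hF]
    have hsub := intervalIntegral.integral_comp_sub_left (a := 0) (b := 1) (fun t : ℝ =>
      (t * (1 - t) * ∑ l, fderiv ℝ (F k l) (x + t • (y - x)) (Pi.single j 1) * (y l - x l)
        - t * F k j (x + t • (y - x)))) 1
    simp only [show (1:ℝ)-1 = 0 by norm_num, show (1:ℝ)-0 = 1 by norm_num] at hsub
    rw [← hsub]
    apply intervalIntegral.integral_congr
    intro t _
    have hpt : x + (1 - t) • (y - x) = y + t • (x - y) := by module
    simp only [hpt]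
    ring
  have hint1 : IntervalIntegrable (fun t : ℝ =>
      (t * (1 - t) * ∑ l, fderiv ℝ (F j l) (y + t • (x - y)) (Pi.single k 1) * (x l - y l)
        - t * F j k (y + t • (x - y)))) volume 0 1 := by
    apply Continuous.intervalIntegrable
    refine Continuous.sub (Continuous.mul (by fun_prop) ?_)
      (Continuous.mul (by fun_prop) (contF hF j k x y))
    exact continuous_finset_sum _ fun l _ => (contDF hF j l x y _).mul continuous_const
  have hint2 : IntervalIntegrable (fun t : ℝ =>
      ((1 - t) * t * ∑ l, fderiv ℝ (F k l) (y + t • (x - y)) (Pi.single j 1) * (y l - x l)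
        - (1 - t) * F k j (y + t • (x - y)))) volume 0 1 := by
    apply Continuous.intervalIntegrable
    refine Continuous.sub (Continuous.mul (by fun_prop) ?_)
      (Continuous.mul (by fun_prop) (contF hF k j x y))
    exact continuous_finset_sum _ fun l _ =>
      (contDF hF k l x y _).mul continuous_const
  rw [Qd_eq hF, hflip, ← intervalIntegral.integral_add hint1 hint2]
  have hFTC : ∫ t in (0:ℝ)..1, ((1 - 2 * t) * F j k (y + t • (x - y))
      + t * (1 - t) * fderiv ℝ (F j k) (y + t • (x - y)) (x - y)) = 0 := by
    have hder : ∀ t ∈ Set.uIcc (0:ℝ) 1,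
        HasDerivAt (fun t : ℝ => t * (1 - t) * F j k (y + t • (x - y)))
          ((1 - 2 * t) * F j k (y + t • (x - y))
            + t * (1 - t) * fderiv ℝ (F j k) (y + t • (x - y)) (x - y)) t := by
      intro t _
      have h1 : HasDerivAt (fun t : ℝ => t * (1 - t)) (1 - 2 * t) t := by
        have h := (hasDerivAt_id t).mul ((hasDerivAt_const t (1:ℝ)).sub (hasDerivAt_id t))
        exact h.congr_deriv (by simp only [Pi.sub_apply, id]; ring)
      exact h1.mul (hasDerivAt_F_line hF j k x y t)
    have hcont : IntervalIntegrable (fun t : ℝ => (1 - 2 * t) * F j k (y + t • (x - y))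
        + t * (1 - t) * fderiv ℝ (F j k) (y + t • (x - y)) (x - y)) volume 0 1 := by
      apply Continuous.intervalIntegrable
      exact (Continuous.mul (by fun_prop) (contF hF j k x y)).add
        (Continuous.mul (by fun_prop) (contDF hF j k x y _))
    rw [intervalIntegral.integral_eq_sub_of_hasDerivAt hder hcont]
    norm_num
  conv_rhs => rw [← hFTC]
  apply intervalIntegral.integral_congr
  intro t _
  set c := y + t • (x - y) with hcdef
  have hdec : fderiv ℝ (F j k) c (x - y)
      = ∑ l, (x l - y l) * fderiv ℝ (F j k) c (Pi.single l 1) := by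
    have := fderiv_pt_decomp (F j k) c (x - y)
    simpa using this
  have hterm : ∀ l : Fin n,
      fderiv ℝ (F j l) c (Pi.single k 1) * (x l - y l)
        + fderiv ℝ (F k l) c (Pi.single j 1) * (y l - x l)
      = (x l - y l) * fderiv ℝ (F j k) c (Pi.single l 1) := by
    intro l
    linear_combination (x l - y l) * closed_key hanti hclosed j k l c
  have hsumeq : (∑ l, fderiv ℝ (F j l) c (Pi.single k 1) * (x l - y l))
      + (∑ l, fderiv ℝ (F k l) c (Pi.single j 1) * (y l - x l))
      = fderiv ℝ (F j k) c (x - y) := by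
    rw [hdec, ← Finset.sum_add_distrib]
    exact Finset.sum_congr rfl fun l _ => hterm l
  have hanti' : F k j c = - F j k c := hanti k j c
  linear_combination (t * (1 - t)) * hsumeq - (1 - t) * hanti'

lemma DA_fst (j : Fin n) (x y u : Fin n → ℝ) :
    DA F j (x, y) (u, 0) = ∑ k, u k * Pd F j k x y := by
  rw [clm_dirsum (DA F j (x, y)) u 0]
  simp only [Pi.zero_apply, zero_mul, Finset.sum_const_zero, add_zero]
  rfl

lemma DA_snd (j : Fin n) (x y w : Fin n → ℝ) :
    DA F j (x, y) (0, w) = ∑ k, w k * Qd F j k x y := by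
  rw [clm_dirsum (DA F j (x, y)) 0 w]
  simp only [Pi.zero_apply, zero_mul, Finset.sum_const_zero, zero_add]
  rfl

lemma DA_mixed (j k : Fin n) (x y : Fin n → ℝ) :
    DA F j (x, y)
      ((-((1/2:ℝ) • (Pi.single k 1 : Fin n → ℝ)), (1/2:ℝ) • (Pi.single k 1 : Fin n → ℝ)) :
        (Fin n → ℝ) × (Fin n → ℝ))
      = (1/2) * (Qd F j k x y - Pd F j k x y) := by
  have h : ((-((1/2:ℝ) • (Pi.single k 1 : Fin n → ℝ)),
        (1/2:ℝ) • (Pi.single k 1 : Fin n → ℝ)) : (Fin n → ℝ) × (Fin n → ℝ))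
      = (1/2:ℝ) • (((((0:Fin n → ℝ), (Pi.single k 1 : Fin n → ℝ)) :
          (Fin n → ℝ) × (Fin n → ℝ)))
        - (((Pi.single k 1 : Fin n → ℝ), (0:Fin n → ℝ)) : (Fin n → ℝ) × (Fin n → ℝ))) := by
    refine Prod.ext ?_ ?_ <;> simp [smul_sub]
  rw [h, _root_.map_smul, map_sub]
  rw [smul_eq_mul]
  rfl

lemma DA_diag (j k : Fin n) (x y : Fin n → ℝ) :
    DA F j (x, y)
      (((Pi.single k 1 : Fin n → ℝ), (Pi.single k 1 : Fin n → ℝ)) :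
        (Fin n → ℝ) × (Fin n → ℝ))
      = Pd F j k x y + Qd F j k x y := by
  have h : (((Pi.single k 1 : Fin n → ℝ), (Pi.single k 1 : Fin n → ℝ)) :
        (Fin n → ℝ) × (Fin n → ℝ))
      = (((Pi.single k 1 : Fin n → ℝ), (0:Fin n → ℝ)) : (Fin n → ℝ) × (Fin n → ℝ))
        + ((((0:Fin n → ℝ), (Pi.single k 1 : Fin n → ℝ)) :
            (Fin n → ℝ) × (Fin n → ℝ))) := by
    refine Prod.ext ?_ ?_ <;> simp
  rw [h, map_add]
  rfl

include hF hA in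
lemma hasDerivAt_lmap_right (X Y v : (Fin n → ℝ) × (Fin n → ℝ)) :
    HasDerivAt (fun s : ℝ => lmap A X (Y + s • v))
      ( ( -((1/2 : ℝ) • v.2),
          fun j => (1/2) * v.1 j
            - DA F j (X.1 - (1/2:ℝ) • Y.2, X.1 + (1/2:ℝ) • Y.2)
                (-((1/2:ℝ) • v.2), (1/2:ℝ) • v.2) ) ) 0 := by
  have hline : HasDerivAt (fun s : ℝ => Y + s • v) v 0 := hasDerivAt_line Y v
  have hsnd := (ContinuousLinearMap.snd ℝ (Fin n → ℝ) (Fin n → ℝ)).hasFDerivAt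
    (x := Y + (0:ℝ) • v)
  have h1 : HasFDerivAt (fun y : (Fin n → ℝ) × (Fin n → ℝ) => X.1 - (1/2:ℝ) • y.2)
      (-((1/2:ℝ) • ContinuousLinearMap.snd ℝ (Fin n → ℝ) (Fin n → ℝ)))
      (Y + (0:ℝ) • v) := (hsnd.const_smul (1/2:ℝ)).const_sub X.1
  have h2 : HasFDerivAt (fun y : (Fin n → ℝ) × (Fin n → ℝ) => X.1 + (1/2:ℝ) • y.2)
      ((1/2:ℝ) • ContinuousLinearMap.snd ℝ (Fin n → ℝ) (Fin n → ℝ))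
      (Y + (0:ℝ) • v) := (hsnd.const_smul (1/2:ℝ)).const_add X.1
  -- derivative of the pair curve feeding `A`
  have hζ : HasDerivAt (fun s : ℝ =>
      ((X.1 - (1/2:ℝ) • (Y + s • v).2, X.1 + (1/2:ℝ) • (Y + s • v).2) :
        (Fin n → ℝ) × (Fin n → ℝ)))
      (-((1/2:ℝ) • v.2), (1/2:ℝ) • v.2) 0 := by
    have hc := (h1.prodMk h2).comp_hasDerivAt 0 hline
    simpa only [Function.comp_def, ContinuousLinearMap.prod_apply,
      ContinuousLinearMap.neg_apply, ContinuousLinearMap.smul_apply,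
      ContinuousLinearMap.coe_snd', ContinuousLinearMap.coe_fst'] using hc
  have hz0 : ((X.1 - (1/2:ℝ) • (Y + (0:ℝ) • v).2, X.1 + (1/2:ℝ) • (Y + (0:ℝ) • v).2) :
      (Fin n → ℝ) × (Fin n → ℝ)) = (X.1 - (1/2:ℝ) • Y.2, X.1 + (1/2:ℝ) • Y.2) := by simp
  -- first component
  have hq : HasDerivAt (fun s : ℝ => X.1 - (1/2:ℝ) • (Y + s • v).2) (-((1/2:ℝ) • v.2)) 0 := by
    have hc := h1.comp_hasDerivAt 0 hline
    simpa only [Function.comp_def, ContinuousLinearMap.prod_apply,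
      ContinuousLinearMap.neg_apply, ContinuousLinearMap.smul_apply,
      ContinuousLinearMap.coe_snd', ContinuousLinearMap.coe_fst'] using hc
  -- second component, as a pi-type map
  have hp : HasDerivAt (fun s : ℝ => fun j =>
      X.2 j + (1/2) * (Y + s • v).1 j
        - A j (X.1 - (1/2:ℝ) • (Y + s • v).2) (X.1 + (1/2:ℝ) • (Y + s • v).2))
      (fun j => (1/2) * v.1 j
        - DA F j (X.1 - (1/2:ℝ) • Y.2, X.1 + (1/2:ℝ) • Y.2)
            (-((1/2:ℝ) • v.2), (1/2:ℝ) • v.2)) 0 := by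
    apply hasDerivAt_pi.2
    intro j
    have hApt : HasFDerivAt (fun w : (Fin n → ℝ) × (Fin n → ℝ) => A j w.1 w.2)
        (DA F j (X.1 - (1/2:ℝ) • Y.2, X.1 + (1/2:ℝ) • Y.2))
        ((X.1 - (1/2:ℝ) • (Y + (0:ℝ) • v).2, X.1 + (1/2:ℝ) • (Y + (0:ℝ) • v).2)) := by
      rw [hz0]
      exact hasFDerivAt_A hF hA j _
    have hA' : HasDerivAt (fun s : ℝ =>
        A j (X.1 - (1/2:ℝ) • (Y + s • v).2) (X.1 + (1/2:ℝ) • (Y + s • v).2))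
        (DA F j (X.1 - (1/2:ℝ) • Y.2, X.1 + (1/2:ℝ) • Y.2)
          (-((1/2:ℝ) • v.2), (1/2:ℝ) • v.2)) 0 := (hApt.comp_hasDerivAt 0 hζ :)
    have hlin : HasDerivAt (fun s : ℝ => X.2 j + (1/2) * (Y + s • v).1 j)
        ((1/2) * v.1 j) 0 := by
      have : HasDerivAt (fun s : ℝ => Y.1 j + s * v.1 j) (v.1 j) 0 := by
        simpa using ((hasDerivAt_id (0:ℝ)).mul_const (v.1 j)).const_add (Y.1 j)
      exact ((this.const_mul (1/2:ℝ)).const_add (X.2 j))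
    exact hlin.sub hA'
  exact hq.prodMk hp

include hF hA in
lemma hasDerivAt_lmap_left (X Y v : (Fin n → ℝ) × (Fin n → ℝ)) :
    HasDerivAt (fun s : ℝ => lmap A (X + s • v) Y)
      ( ( v.1,
          fun j => v.2 j
            - DA F j (X.1 - (1/2:ℝ) • Y.2, X.1 + (1/2:ℝ) • Y.2) (v.1, v.1) ) ) 0 := by
  have hline : HasDerivAt (fun s : ℝ => X + s • v) v 0 := hasDerivAt_line X v
  have hfst := (ContinuousLinearMap.fst ℝ (Fin n → ℝ) (Fin n → ℝ)).hasFDerivAt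
    (x := X + (0:ℝ) • v)
  have h1 : HasFDerivAt (fun x : (Fin n → ℝ) × (Fin n → ℝ) => x.1 - (1/2:ℝ) • Y.2)
      (ContinuousLinearMap.fst ℝ (Fin n → ℝ) (Fin n → ℝ)) (X + (0:ℝ) • v) :=
    hfst.sub_const ((1/2:ℝ) • Y.2)
  have h2 : HasFDerivAt (fun x : (Fin n → ℝ) × (Fin n → ℝ) => x.1 + (1/2:ℝ) • Y.2)
      (ContinuousLinearMap.fst ℝ (Fin n → ℝ) (Fin n → ℝ)) (X + (0:ℝ) • v) :=
    hfst.add_const ((1/2:ℝ) • Y.2)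
  have hζ : HasDerivAt (fun s : ℝ =>
      (((X + s • v).1 - (1/2:ℝ) • Y.2, (X + s • v).1 + (1/2:ℝ) • Y.2) :
        (Fin n → ℝ) × (Fin n → ℝ)))
      (v.1, v.1) 0 := by
    have hc := (h1.prodMk h2).comp_hasDerivAt 0 hline
    simpa only [Function.comp_def, ContinuousLinearMap.prod_apply,
      ContinuousLinearMap.neg_apply, ContinuousLinearMap.smul_apply,
      ContinuousLinearMap.coe_snd', ContinuousLinearMap.coe_fst'] using hc
  have hz0 : (((X + (0:ℝ) • v).1 - (1/2:ℝ) • Y.2, (X + (0:ℝ) • v).1 + (1/2:ℝ) • Y.2) :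
      (Fin n → ℝ) × (Fin n → ℝ)) = (X.1 - (1/2:ℝ) • Y.2, X.1 + (1/2:ℝ) • Y.2) := by simp
  have hq : HasDerivAt (fun s : ℝ => (X + s • v).1 - (1/2:ℝ) • Y.2) v.1 0 := by
    have hc := h1.comp_hasDerivAt 0 hline
    simpa only [Function.comp_def, ContinuousLinearMap.prod_apply,
      ContinuousLinearMap.neg_apply, ContinuousLinearMap.smul_apply,
      ContinuousLinearMap.coe_snd', ContinuousLinearMap.coe_fst'] using hc
  have hp : HasDerivAt (fun s : ℝ => fun j =>
      (X + s • v).2 j + (1/2) * Y.1 j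
        - A j ((X + s • v).1 - (1/2:ℝ) • Y.2) ((X + s • v).1 + (1/2:ℝ) • Y.2))
      (fun j => v.2 j
        - DA F j (X.1 - (1/2:ℝ) • Y.2, X.1 + (1/2:ℝ) • Y.2) (v.1, v.1)) 0 := by
    apply hasDerivAt_pi.2
    intro j
    have hApt : HasFDerivAt (fun w : (Fin n → ℝ) × (Fin n → ℝ) => A j w.1 w.2)
        (DA F j (X.1 - (1/2:ℝ) • Y.2, X.1 + (1/2:ℝ) • Y.2))
        (((X + (0:ℝ) • v).1 - (1/2:ℝ) • Y.2, (X + (0:ℝ) • v).1 + (1/2:ℝ) • Y.2)) := by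
      rw [hz0]
      exact hasFDerivAt_A hF hA j _
    have hA' : HasDerivAt (fun s : ℝ =>
        A j ((X + s • v).1 - (1/2:ℝ) • Y.2) ((X + s • v).1 + (1/2:ℝ) • Y.2))
        (DA F j (X.1 - (1/2:ℝ) • Y.2, X.1 + (1/2:ℝ) • Y.2) (v.1, v.1)) 0 :=
      (hApt.comp_hasDerivAt 0 hζ :)
    have hlin : HasDerivAt (fun s : ℝ => (X + s • v).2 j + (1/2) * Y.1 j) (v.2 j) 0 := by
      have : HasDerivAt (fun s : ℝ => X.2 j + s * v.2 j) (v.2 j) 0 := by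
        simpa using ((hasDerivAt_id (0:ℝ)).mul_const (v.2 j)).const_add (X.2 j)
      exact this.add_const ((1/2) * Y.1 j)
    exact hlin.sub hA'
  exact hq.prodMk hp

include hA in
lemma A_diag (j : Fin n) (q : Fin n → ℝ) : A j q q = 0 := by
  rw [hA]
  simp

include hF hA in
lemma diffAt_lmap (X Y : (Fin n → ℝ) × (Fin n → ℝ)) :
    DifferentiableAt ℝ (fun y => lmap A X y) Y := by
  have hsnd := (ContinuousLinearMap.snd ℝ (Fin n → ℝ) (Fin n → ℝ)).hasFDerivAt (x := Y)
  have h1 : HasFDerivAt (fun y : (Fin n → ℝ) × (Fin n → ℝ) => X.1 - (1/2:ℝ) • y.2)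
      (-((1/2:ℝ) • ContinuousLinearMap.snd ℝ (Fin n → ℝ) (Fin n → ℝ))) Y :=
    (hsnd.const_smul (1/2:ℝ)).const_sub X.1
  have h2 : HasFDerivAt (fun y : (Fin n → ℝ) × (Fin n → ℝ) => X.1 + (1/2:ℝ) • y.2)
      ((1/2:ℝ) • ContinuousLinearMap.snd ℝ (Fin n → ℝ) (Fin n → ℝ)) Y :=
    (hsnd.const_smul (1/2:ℝ)).const_add X.1
  apply DifferentiableAt.prodMk
  · exact h1.differentiableAt
  · apply differentiableAt_pi.2
    intro j
    have hpair : DifferentiableAt ℝ (fun y : (Fin n → ℝ) × (Fin n → ℝ) =>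
        ((X.1 - (1/2:ℝ) • y.2, X.1 + (1/2:ℝ) • y.2) : (Fin n → ℝ) × (Fin n → ℝ))) Y :=
      (h1.prodMk h2).differentiableAt
    have hAj : DifferentiableAt ℝ (fun y : (Fin n → ℝ) × (Fin n → ℝ) =>
        A j (X.1 - (1/2:ℝ) • y.2) (X.1 + (1/2:ℝ) • y.2)) Y :=
      (DifferentiableAt.comp Y
        ((hasFDerivAt_A hF hA j (X.1 - (1/2:ℝ) • Y.2, X.1 + (1/2:ℝ) • Y.2)).differentiableAt)
        hpair :)
    have hlin : DifferentiableAt ℝ (fun y : (Fin n → ℝ) × (Fin n → ℝ) =>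
        X.2 j + (1/2) * y.1 j) Y := by fun_prop
    exact hlin.sub hAj

include hF hA in
lemma fderiv_Hl_right {H : (Fin n → ℝ) × (Fin n → ℝ) → ℝ} (hH : ContDiff ℝ (⊤ : ℕ∞) H)
    (X Y v : (Fin n → ℝ) × (Fin n → ℝ)) :
    fderiv ℝ (fun y => H (lmap A X y)) Y v
      = fderiv ℝ H (lmap A X Y)
          ( -((1/2 : ℝ) • v.2),
            fun j => (1/2) * v.1 j
              - DA F j (X.1 - (1/2:ℝ) • Y.2, X.1 + (1/2:ℝ) • Y.2)
                  (-((1/2:ℝ) • v.2), (1/2:ℝ) • v.2) ) := by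
  have hdiff : DifferentiableAt ℝ (fun y => H (lmap A X y)) Y :=
    DifferentiableAt.comp Y (hH.differentiable (by simp) _)
      (diffAt_lmap hF hA X Y)
  have h1 := fderiv_dir hdiff v
  have h2 := (hH.differentiable (by simp) (lmap A X (Y + (0:ℝ) • v))).hasFDerivAt.comp_hasDerivAt
    0 (hasDerivAt_lmap_right hF hA X Y v)
  rw [show Y + (0:ℝ) • v = Y from by simp] at h2
  exact h1.unique h2

include hF hA in
lemma fderiv_Hl_left {H : (Fin n → ℝ) × (Fin n → ℝ) → ℝ} (hH : ContDiff ℝ (⊤ : ℕ∞) H)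
    (X Y v : (Fin n → ℝ) × (Fin n → ℝ)) :
    fderiv ℝ (fun x => H (lmap A x Y)) X v
      = fderiv ℝ H (lmap A X Y)
          ( v.1,
            fun j => v.2 j
              - DA F j (X.1 - (1/2:ℝ) • Y.2, X.1 + (1/2:ℝ) • Y.2) (v.1, v.1) ) := by
  have hfst := (ContinuousLinearMap.fst ℝ (Fin n → ℝ) (Fin n → ℝ)).hasFDerivAt (x := X)
  have h1 : HasFDerivAt (fun x : (Fin n → ℝ) × (Fin n → ℝ) => x.1 - (1/2:ℝ) • Y.2)
      (ContinuousLinearMap.fst ℝ (Fin n → ℝ) (Fin n → ℝ)) X :=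
    hfst.sub_const ((1/2:ℝ) • Y.2)
  have h2 : HasFDerivAt (fun x : (Fin n → ℝ) × (Fin n → ℝ) => x.1 + (1/2:ℝ) • Y.2)
      (ContinuousLinearMap.fst ℝ (Fin n → ℝ) (Fin n → ℝ)) X :=
    hfst.add_const ((1/2:ℝ) • Y.2)
  have hlm : DifferentiableAt ℝ (fun x => lmap A x Y) X := by
    apply DifferentiableAt.prodMk
    · exact h1.differentiableAt
    · apply differentiableAt_pi.2
      intro j
      have hpair : DifferentiableAt ℝ (fun x : (Fin n → ℝ) × (Fin n → ℝ) =>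
          ((x.1 - (1/2:ℝ) • Y.2, x.1 + (1/2:ℝ) • Y.2) : (Fin n → ℝ) × (Fin n → ℝ))) X :=
        (h1.prodMk h2).differentiableAt
      have hAj : DifferentiableAt ℝ (fun x : (Fin n → ℝ) × (Fin n → ℝ) =>
          A j (x.1 - (1/2:ℝ) • Y.2) (x.1 + (1/2:ℝ) • Y.2)) X :=
        (DifferentiableAt.comp X
          ((hasFDerivAt_A hF hA j (X.1 - (1/2:ℝ) • Y.2, X.1 + (1/2:ℝ) • Y.2)).differentiableAt)
          hpair :)
      have hlin : DifferentiableAt ℝ (fun x : (Fin n → ℝ) × (Fin n → ℝ) =>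
          x.2 j + (1/2) * Y.1 j) X := by fun_prop
      exact hlin.sub hAj
  have hdiff : DifferentiableAt ℝ (fun x => H (lmap A x Y)) X :=
    DifferentiableAt.comp X (hH.differentiable (by simp) _) hlm
  have ha := fderiv_dir hdiff v
  have hb := (hH.differentiable (by simp) (lmap A (X + (0:ℝ) • v) Y)).hasFDerivAt.comp_hasDerivAt
    0 (hasDerivAt_lmap_left hF hA X Y v)
  rw [show X + (0:ℝ) • v = X from by simp] at hb
  exact ha.unique hb

end Valatin

end MagAux


/-- If `γ^t` solves the magnetic Hamilton equations
`γ̇_q = ∂H/∂p`, `γ̇_p = -∂H/∂q - F(γ_q)∂H/∂p` with `γ⁰ = x⁰`, then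
`X = (1/2)(γ^t + x⁰) + v^t`, `Y = J(γ^t - x⁰) + y^t` solve the Hamiltonian system
`Ẋ = ∂H₀/∂Y`, `Ẏ = -∂H₀/∂X` for `H₀(x,y) = H(l(x,y))`, with `X(0) = x⁰`, `Y(0) = 0`. -/
theorem magnetic_trajectory_formula {n : ℕ}
    (F : Fin n → Fin n → (Fin n → ℝ) → ℝ)
    (hF : ∀ j k, ContDiff ℝ (⊤ : ℕ∞) (F j k))
    (hanti : ∀ j k q, F j k q = - F k j q)
    (hclosed : ∀ j k l (q : Fin n → ℝ),
      fderiv ℝ (F k l) q (Pi.single j 1) + fderiv ℝ (F l j) q (Pi.single k 1)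
        + fderiv ℝ (F j k) q (Pi.single l 1) = 0)
    (A : Fin n → (Fin n → ℝ) → (Fin n → ℝ) → ℝ)
    (hA : ∀ j (q q' : Fin n → ℝ),
      A j q q' = ∫ t in (0:ℝ)..1, t * ∑ k, F j k (q' + t • (q - q')) * (q k - q' k))
    (H : (Fin n → ℝ) × (Fin n → ℝ) → ℝ) (hH : ContDiff ℝ (⊤ : ℕ∞) H)
    (γ : ℝ → (Fin n → ℝ) × (Fin n → ℝ)) (x0 : (Fin n → ℝ) × (Fin n → ℝ))
    (hγ0 : γ 0 = x0)
    (hγq : ∀ (t : ℝ) (j : Fin n), HasDerivAt (fun s => (γ s).1 j)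
      (fderiv ℝ H (γ t) (0, Pi.single j 1)) t)
    (hγp : ∀ (t : ℝ) (j : Fin n), HasDerivAt (fun s => (γ s).2 j)
      (-(fderiv ℝ H (γ t) (Pi.single j 1, 0))
        - ∑ k, F j k ((γ t).1) * fderiv ℝ H (γ t) (0, Pi.single k 1)) t) :
    (Xdyn A γ x0 0 = x0) ∧ (Ydyn A γ x0 0 = 0) ∧
    (∀ (t : ℝ) (j : Fin n), HasDerivAt (fun s => (Xdyn A γ x0 s).1 j)
      (fderiv ℝ (fun y => H (lmap A (Xdyn A γ x0 t) y)) (Ydyn A γ x0 t)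
        (Pi.single j 1, 0)) t) ∧
    (∀ (t : ℝ) (j : Fin n), HasDerivAt (fun s => (Xdyn A γ x0 s).2 j)
      (fderiv ℝ (fun y => H (lmap A (Xdyn A γ x0 t) y)) (Ydyn A γ x0 t)
        (0, Pi.single j 1)) t) ∧
    (∀ (t : ℝ) (j : Fin n), HasDerivAt (fun s => (Ydyn A γ x0 s).1 j)
      (-(fderiv ℝ (fun x => H (lmap A x (Ydyn A γ x0 t))) (Xdyn A γ x0 t)
        (Pi.single j 1, 0))) t) ∧
    (∀ (t : ℝ) (j : Fin n), HasDerivAt (fun s => (Ydyn A γ x0 s).2 j)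
      (-(fderiv ℝ (fun x => H (lmap A x (Ydyn A γ x0 t))) (Xdyn A γ x0 t)
        (0, Pi.single j 1))) t) := by

  classical
  have hXq1 : ∀ t : ℝ, (Xdyn A γ x0 t).1 - (1/2:ℝ) • (Ydyn A γ x0 t).2 = (γ t).1 := by
    intro t
    funext i
    simp only [Xdyn, Ydyn, Pi.sub_apply, Pi.smul_apply, Pi.add_apply, smul_eq_mul]
    ring
  have hXq2 : ∀ t : ℝ, (Xdyn A γ x0 t).1 + (1/2:ℝ) • (Ydyn A γ x0 t).2 = x0.1 := by
    intro t
    funext i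
    simp only [Xdyn, Ydyn, Pi.add_apply, Pi.smul_apply, smul_eq_mul]
    ring
  have hlXY : ∀ t : ℝ, lmap A (Xdyn A γ x0 t) (Ydyn A γ x0 t) = γ t := by
    intro t
    unfold lmap
    rw [hXq1 t, hXq2 t]
    refine Prod.ext rfl ?_
    funext j
    simp only [Xdyn, Ydyn]
    ring
  refine ⟨?_, ?_, ?_, ?_, ?_, ?_⟩
  · -- X(0) = x0
    unfold Xdyn
    rw [hγ0]
    refine Prod.ext ?_ ?_
    · funext i
      simp only [Pi.smul_apply, Pi.add_apply, smul_eq_mul]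
      ring
    · funext j
      simp only [MagAux.A_diag hA]
      ring
  · -- Y(0) = 0
    unfold Ydyn
    rw [hγ0]
    refine Prod.ext ?_ ?_ <;> funext j <;> simp
  · -- equation for X_q
    intro t j
    rw [MagAux.fderiv_Hl_right hF hA hH (Xdyn A γ x0 t) (Ydyn A γ x0 t)
      (Pi.single j 1, 0), hlXY t]
    have h0 : HasDerivAt (fun s => (Xdyn A γ x0 s).1 j)
        ((1/2) * fderiv ℝ H (γ t) (0, Pi.single j 1)) t :=
      ((hγq t j).add_const (x0.1 j)).const_mul (1/2:ℝ)
    convert h0 using 1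
    have hvec : ((-((1/2:ℝ) • (((Pi.single j (1:ℝ) : Fin n → ℝ), (0 : Fin n → ℝ)) :
          (Fin n → ℝ) × (Fin n → ℝ)).2),
        fun k => (1/2) * (((Pi.single j (1:ℝ) : Fin n → ℝ), (0 : Fin n → ℝ)) :
          (Fin n → ℝ) × (Fin n → ℝ)).1 k
          - MagAux.DA F k ((Xdyn A γ x0 t).1 - (1/2:ℝ) • (Ydyn A γ x0 t).2,
              (Xdyn A γ x0 t).1 + (1/2:ℝ) • (Ydyn A γ x0 t).2)
            (-((1/2:ℝ) • (((Pi.single j (1:ℝ) : Fin n → ℝ), (0 : Fin n → ℝ)) :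
              (Fin n → ℝ) × (Fin n → ℝ)).2),
              (1/2:ℝ) • (((Pi.single j (1:ℝ) : Fin n → ℝ), (0 : Fin n → ℝ)) :
              (Fin n → ℝ) × (Fin n → ℝ)).2)) : (Fin n → ℝ) × (Fin n → ℝ))
        = (1/2:ℝ) • (((0 : Fin n → ℝ), (Pi.single j (1:ℝ) : Fin n → ℝ)) :
            (Fin n → ℝ) × (Fin n → ℝ)) := by
      refine Prod.ext ?_ ?_
      · simp
      · funext k
        simp [Prod.mk_zero_zero]
    rw [hvec, _root_.map_smul, smul_eq_mul]
  · -- equation for X_p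
    intro t j
    rw [MagAux.fderiv_Hl_right hF hA hH (Xdyn A γ x0 t) (Ydyn A γ x0 t)
      (0, Pi.single j 1), hlXY t, hXq1 t, hXq2 t]
    -- left-hand side derivative
    have hcurve1 : HasDerivAt (fun s : ℝ => ((((γ s).1, x0.1)) :
        (Fin n → ℝ) × (Fin n → ℝ)))
        ((fun k => fderiv ℝ H (γ t) (0, Pi.single k 1)), (0 : Fin n → ℝ)) t :=
      (hasDerivAt_pi.2 (fun k => hγq t k)).prodMk (hasDerivAt_const t x0.1)
    have hcurve2 : HasDerivAt (fun s : ℝ => (((x0.1, (γ s).1)) :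
        (Fin n → ℝ) × (Fin n → ℝ)))
        ((0 : Fin n → ℝ), (fun k => fderiv ℝ H (γ t) (0, Pi.single k 1))) t :=
      (hasDerivAt_const t x0.1).prodMk (hasDerivAt_pi.2 (fun k => hγq t k))
    have hA1 : HasDerivAt (fun s : ℝ => A j (γ s).1 x0.1)
        (MagAux.DA F j ((γ t).1, x0.1)
          ((fun k => fderiv ℝ H (γ t) (0, Pi.single k 1)), (0 : Fin n → ℝ))) t :=
      ((MagAux.hasFDerivAt_A hF hA j ((γ t).1, x0.1)).comp_hasDerivAt t hcurve1 :)
    have hA2 : HasDerivAt (fun s : ℝ => A j x0.1 (γ s).1)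
        (MagAux.DA F j (x0.1, (γ t).1)
          ((0 : Fin n → ℝ), (fun k => fderiv ℝ H (γ t) (0, Pi.single k 1)))) t :=
      ((MagAux.hasFDerivAt_A hF hA j (x0.1, (γ t).1)).comp_hasDerivAt t hcurve2 :)
    have h0 : HasDerivAt (fun s => (Xdyn A γ x0 s).2 j)
        ((1/2) * (-(fderiv ℝ H (γ t) (Pi.single j 1, 0))
            - ∑ k, F j k ((γ t).1) * fderiv ℝ H (γ t) (0, Pi.single k 1))
          + (1/2) * (MagAux.DA F j ((γ t).1, x0.1)
              ((fun k => fderiv ℝ H (γ t) (0, Pi.single k 1)), (0 : Fin n → ℝ))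
            + MagAux.DA F j (x0.1, (γ t).1)
              ((0 : Fin n → ℝ), (fun k => fderiv ℝ H (γ t) (0, Pi.single k 1))))) t :=
      (((hγp t j).add_const (x0.2 j)).const_mul (1/2:ℝ)).add
        ((hA1.add hA2).const_mul (1/2:ℝ))
    convert h0 using 1
    -- now pure algebra on the derivative values
    rw [MagAux.DA_fst, MagAux.DA_snd, MagAux.clm_dirsum (fderiv ℝ H (γ t))]
    have key : ∀ k : Fin n,
        MagAux.Pd F j k (γ t).1 x0.1 + MagAux.Qd F j k x0.1 (γ t).1 - F j k ((γ t).1)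
          = MagAux.Pd F k j (γ t).1 x0.1 - MagAux.Qd F k j (γ t).1 x0.1 := by
      intro k
      have hc := MagAux.curl_Pd hF hanti hclosed j k ((γ t).1) x0.1
      have hs := MagAux.symm_Qd hF hanti hclosed j k x0.1 ((γ t).1)
      linarith
    have hT1 : (∑ i, (-((1/2:ℝ) • (((0 : Fin n → ℝ), (Pi.single j (1:ℝ) : Fin n → ℝ)) :
          (Fin n → ℝ) × (Fin n → ℝ)).2)) i * fderiv ℝ H (γ t) (Pi.single i 1, 0))
        = -(1/2) * fderiv ℝ H (γ t) (Pi.single j 1, 0) := by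
      rw [show (∑ i, (-((1/2:ℝ) • (((0 : Fin n → ℝ), (Pi.single j (1:ℝ) : Fin n → ℝ)) :
            (Fin n → ℝ) × (Fin n → ℝ)).2)) i * fderiv ℝ H (γ t) (Pi.single i 1, 0))
          = ∑ i, (Pi.single j (1:ℝ) : Fin n → ℝ) i
              * (-(1/2) * fderiv ℝ H (γ t) (Pi.single i 1, 0)) from
        Finset.sum_congr rfl fun i _ => by
          simp only [Pi.neg_apply, Pi.smul_apply, smul_eq_mul]
          ring]
      rw [MagAux.sum_single_mul (fun i => -(1/2) * fderiv ℝ H (γ t) (Pi.single i 1, 0)) j]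
    rw [hT1]
    have hsplit : (1/2) * (-(fderiv ℝ H (γ t) (Pi.single j 1, 0))
          - ∑ k, F j k ((γ t).1) * fderiv ℝ H (γ t) (0, Pi.single k 1))
        + (1/2) * ((∑ k, fderiv ℝ H (γ t) (0, Pi.single k 1) * MagAux.Pd F j k (γ t).1 x0.1)
          + (∑ k, fderiv ℝ H (γ t) (0, Pi.single k 1) * MagAux.Qd F j k x0.1 (γ t).1))
        = -(1/2) * fderiv ℝ H (γ t) (Pi.single j 1, 0)
          + ∑ k, ((1/2) * (fderiv ℝ H (γ t) (0, Pi.single k 1)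
              * MagAux.Pd F j k (γ t).1 x0.1)
            + (1/2) * (fderiv ℝ H (γ t) (0, Pi.single k 1)
              * MagAux.Qd F j k x0.1 (γ t).1)
            - (1/2) * (F j k ((γ t).1) * fderiv ℝ H (γ t) (0, Pi.single k 1))) := by
      rw [Finset.sum_sub_distrib, Finset.sum_add_distrib, ← Finset.mul_sum, ← Finset.mul_sum,
        ← Finset.mul_sum]
      ring
    rw [hsplit]
    congr 1
    apply Finset.sum_congr rfl
    intro k _
    rw [show (-((1/2:ℝ) • (((0 : Fin n → ℝ), (Pi.single j (1:ℝ) : Fin n → ℝ)) :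
          (Fin n → ℝ) × (Fin n → ℝ)).2),
        (1/2:ℝ) • (((0 : Fin n → ℝ), (Pi.single j (1:ℝ) : Fin n → ℝ)) :
          (Fin n → ℝ) × (Fin n → ℝ)).2)
      = (-((1/2:ℝ) • (Pi.single j (1:ℝ) : Fin n → ℝ)),
        (1/2:ℝ) • (Pi.single j (1:ℝ) : Fin n → ℝ)) from rfl]
    rw [MagAux.DA_mixed]
    simp only [Pi.zero_apply, Pi.smul_apply, smul_eq_mul]
    linear_combination (-(1/2) * fderiv ℝ H (γ t) (0, Pi.single k 1)) * key k
  · -- equation for Y_q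
    intro t j
    rw [MagAux.fderiv_Hl_left hF hA hH (Xdyn A γ x0 t) (Ydyn A γ x0 t)
      (Pi.single j 1, 0), hlXY t, hXq1 t, hXq2 t]
    have hcurve1 : HasDerivAt (fun s : ℝ => ((((γ s).1, x0.1)) :
        (Fin n → ℝ) × (Fin n → ℝ)))
        ((fun k => fderiv ℝ H (γ t) (0, Pi.single k 1)), (0 : Fin n → ℝ)) t :=
      (hasDerivAt_pi.2 (fun k => hγq t k)).prodMk (hasDerivAt_const t x0.1)
    have hcurve2 : HasDerivAt (fun s : ℝ => (((x0.1, (γ s).1)) :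
        (Fin n → ℝ) × (Fin n → ℝ)))
        ((0 : Fin n → ℝ), (fun k => fderiv ℝ H (γ t) (0, Pi.single k 1))) t :=
      (hasDerivAt_const t x0.1).prodMk (hasDerivAt_pi.2 (fun k => hγq t k))
    have hA1 : HasDerivAt (fun s : ℝ => A j (γ s).1 x0.1)
        (MagAux.DA F j ((γ t).1, x0.1)
          ((fun k => fderiv ℝ H (γ t) (0, Pi.single k 1)), (0 : Fin n → ℝ))) t :=
      ((MagAux.hasFDerivAt_A hF hA j ((γ t).1, x0.1)).comp_hasDerivAt t hcurve1 :)
    have hA2 : HasDerivAt (fun s : ℝ => A j x0.1 (γ s).1)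
        (MagAux.DA F j (x0.1, (γ t).1)
          ((0 : Fin n → ℝ), (fun k => fderiv ℝ H (γ t) (0, Pi.single k 1)))) t :=
      ((MagAux.hasFDerivAt_A hF hA j (x0.1, (γ t).1)).comp_hasDerivAt t hcurve2 :)
    have h0 : HasDerivAt (fun s => (Ydyn A γ x0 s).1 j)
        ((-(fderiv ℝ H (γ t) (Pi.single j 1, 0))
            - ∑ k, F j k ((γ t).1) * fderiv ℝ H (γ t) (0, Pi.single k 1))
          + (MagAux.DA F j ((γ t).1, x0.1)
              ((fun k => fderiv ℝ H (γ t) (0, Pi.single k 1)), (0 : Fin n → ℝ))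
            - MagAux.DA F j (x0.1, (γ t).1)
              ((0 : Fin n → ℝ), (fun k => fderiv ℝ H (γ t) (0, Pi.single k 1))))) t :=
      ((hγp t j).sub_const (x0.2 j)).add (hA1.sub hA2)
    convert h0 using 1
    rw [MagAux.DA_fst, MagAux.DA_snd, MagAux.clm_dirsum (fderiv ℝ H (γ t))]
    have key : ∀ k : Fin n,
        MagAux.Pd F j k (γ t).1 x0.1 + MagAux.Qd F j k x0.1 (γ t).1 - F j k ((γ t).1)
          = MagAux.Pd F k j (γ t).1 x0.1 - MagAux.Qd F k j (γ t).1 x0.1 := by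
      intro k
      have hc := MagAux.curl_Pd hF hanti hclosed j k ((γ t).1) x0.1
      have hs := MagAux.symm_Qd hF hanti hclosed j k x0.1 ((γ t).1)
      linarith
    have key2 : ∀ k : Fin n,
        MagAux.Qd F j k x0.1 (γ t).1 + MagAux.Qd F k j (γ t).1 x0.1 = 0 := fun k =>
      MagAux.symm_Qd hF hanti hclosed j k x0.1 ((γ t).1)
    have hT1 : (∑ i, (((Pi.single j (1:ℝ) : Fin n → ℝ), (0 : Fin n → ℝ)) :
          (Fin n → ℝ) × (Fin n → ℝ)).1 i * fderiv ℝ H (γ t) (Pi.single i 1, 0))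
        = fderiv ℝ H (γ t) (Pi.single j 1, 0) :=
      MagAux.sum_single_mul (fun i => fderiv ℝ H (γ t) (Pi.single i 1, 0)) j
    rw [hT1]
    have hsplit : (-(fderiv ℝ H (γ t) (Pi.single j 1, 0))
          - ∑ k, F j k ((γ t).1) * fderiv ℝ H (γ t) (0, Pi.single k 1))
        + ((∑ k, fderiv ℝ H (γ t) (0, Pi.single k 1) * MagAux.Pd F j k (γ t).1 x0.1)
          - (∑ k, fderiv ℝ H (γ t) (0, Pi.single k 1) * MagAux.Qd F j k x0.1 (γ t).1))
        = -(fderiv ℝ H (γ t) (Pi.single j 1, 0))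
          + ∑ k, (fderiv ℝ H (γ t) (0, Pi.single k 1) * MagAux.Pd F j k (γ t).1 x0.1
            - fderiv ℝ H (γ t) (0, Pi.single k 1) * MagAux.Qd F j k x0.1 (γ t).1
            - F j k ((γ t).1) * fderiv ℝ H (γ t) (0, Pi.single k 1)) := by
      rw [Finset.sum_sub_distrib, Finset.sum_sub_distrib]
      ring
    rw [hsplit, neg_add]
    congr 1
    rw [← Finset.sum_neg_distrib]
    apply Finset.sum_congr rfl
    intro k _
    rw [MagAux.DA_diag]
    simp only [Pi.zero_apply]
    linear_combination (-(fderiv ℝ H (γ t) (0, Pi.single k 1))) * key k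
      + (2 * fderiv ℝ H (γ t) (0, Pi.single k 1)) * key2 k
  · -- equation for Y_p
    intro t j
    rw [MagAux.fderiv_Hl_left hF hA hH (Xdyn A γ x0 t) (Ydyn A γ x0 t)
      (0, Pi.single j 1), hlXY t]
    have h0 : HasDerivAt (fun s => (Ydyn A γ x0 s).2 j)
        (-(fderiv ℝ H (γ t) (0, Pi.single j 1))) t :=
      ((hγq t j).sub_const (x0.1 j)).neg
    convert h0 using 3
    · refine Prod.ext ?_ ?_
      · simp
      · funext k
        simp [Prod.mk_zero_zero]
end

section
/- With F̃ = ω₀ + F as above on ℝ^7 and v_H = ∂/∂t + (∂H/∂p)∂/∂q + (eE - (e/c) B × ∂H/∂p - ∂H/∂q)∂/∂p the vector field of the charged-particle dynamics for a smooth time-independent Hamiltonian H(q,p), one has v_H ⌟ F̃ = dH - v₀(H) dt and L_{v_H} F̃ = d(v₀(H)) ∧ dt, where v₀ = ∂/∂t + eE ∂/∂p and v₀(H) = e E · ∂H/∂p. -/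
/-! Auxiliary definitions and lemmas -/

abbrev X7 : Type := ℝ × (Fin 3 → ℝ) × (Fin 3 → ℝ)
abbrev Y6 : Type := (Fin 3 → ℝ) × (Fin 3 → ℝ)

lemma clm_apply_pair (φ : Y6 →L[ℝ] ℝ) (a b : Fin 3 → ℝ) :
    φ (a, b) = ∑ j, a j * φ (Pi.single j 1, 0) + ∑ j, b j * φ (0, Pi.single j 1) := by
  have h1 : (a, b) = (∑ j, (a j) • ((Pi.single j 1 : Fin 3 → ℝ), (0 : Fin 3 → ℝ)))
      + ∑ j, (b j) • ((0 : Fin 3 → ℝ), (Pi.single j 1 : Fin 3 → ℝ)) := by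
    apply Prod.ext <;>
      simp [Prod.fst_sum, Prod.snd_sum, ← Pi.single_smul, smul_eq_mul, Finset.univ_sum_single]
  rw [h1, map_add, map_sum, map_sum]
  congr 1
  · exact Finset.sum_congr rfl fun j _ => by rw [map_smul, smul_eq_mul]
  · exact Finset.sum_congr rfl fun j _ => by rw [map_smul, smul_eq_mul]

lemma clm_apply_rpair (φ : (ℝ × (Fin 3 → ℝ)) →L[ℝ] ℝ) (s : ℝ) (a : Fin 3 → ℝ) :
    φ (s, a) = s * φ (1, 0) + ∑ j, a j * φ (0, Pi.single j 1) := by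
  have h1 : (s, a) = s • ((1:ℝ), (0 : Fin 3 → ℝ))
      + ∑ j, (a j) • ((0:ℝ), (Pi.single j 1 : Fin 3 → ℝ)) := by
    apply Prod.ext <;>
      simp [Prod.fst_sum, Prod.snd_sum, ← Pi.single_smul, smul_eq_mul, Finset.univ_sum_single]
  rw [h1, map_add, map_sum, map_smul, smul_eq_mul]
  congr 1
  exact Finset.sum_congr rfl fun j _ => by rw [map_smul, smul_eq_mul]

lemma fderiv_rpair_decomp (g : ℝ × (Fin 3 → ℝ) → ℝ) (hg : ContDiff ℝ (⊤ : ℕ∞) g)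
    (t : ℝ) (q : Fin 3 → ℝ) (s : ℝ) (a : Fin 3 → ℝ) :
    fderiv ℝ g (t, q) (s, a)
      = s * deriv (fun s' => g (s', q)) t
        + ∑ j, a j * fderiv ℝ (fun q' => g (t, q')) q (Pi.single j 1) := by
  have hg' := (hg.differentiable (by simp) (t, q)).hasFDerivAt
  have e1 : fderiv ℝ g (t, q) (1, 0) = deriv (fun s' => g (s', q)) t := by
    have hι : HasFDerivAt (fun s' : ℝ => ((s' : ℝ), q))
        ((ContinuousLinearMap.id ℝ ℝ).prod 0) t :=
      (hasFDerivAt_id t).prodMk (hasFDerivAt_const q t)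
    have h2 : HasDerivAt (fun s' => g (s', q))
        (((fderiv ℝ g (t, q)).comp ((ContinuousLinearMap.id ℝ ℝ).prod 0)) 1) t :=
      (hg'.comp t hι).hasDerivAt
    rw [h2.deriv]; simp
  have e2 : ∀ v, fderiv ℝ g (t, q) (0, v) = fderiv ℝ (fun q' => g (t, q')) q v := by
    intro v
    have hι : HasFDerivAt (fun q' : Fin 3 → ℝ => ((t : ℝ), q'))
        ((0 : (Fin 3 → ℝ) →L[ℝ] ℝ).prod (ContinuousLinearMap.id ℝ (Fin 3 → ℝ))) q :=
      (hasFDerivAt_const t q).prodMk (hasFDerivAt_id q)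
    have h3 : fderiv ℝ (fun q' => g (t, q')) q
        = (fderiv ℝ g (t, q)).comp
            ((0 : (Fin 3 → ℝ) →L[ℝ] ℝ).prod (ContinuousLinearMap.id ℝ (Fin 3 → ℝ))) :=
      (hg'.comp q hι).fderiv
    rw [h3]; simp
  rw [clm_apply_rpair (fderiv ℝ g (t, q)) s a, e1]
  congr 1
  exact Finset.sum_congr rfl fun j _ => by rw [e2]

lemma fderiv_hess (H : Y6 → ℝ) (hH : ContDiff ℝ (⊤ : ℕ∞) H) (w0 : Y6) (z v : X7) :
    fderiv ℝ (fun z' : X7 => fderiv ℝ H (z'.2.1, z'.2.2) w0) z v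
      = fderiv ℝ (fderiv ℝ H) z.2 v.2 w0 := by
  have hd : DifferentiableAt ℝ (fderiv ℝ H) z.2 :=
    (hH.fderiv_right (m := (⊤ : ℕ∞)) (by simp)).differentiable (by simp) z.2
  have hsnd : HasFDerivAt (fun z' : X7 => z'.2) (ContinuousLinearMap.snd ℝ ℝ Y6) z :=
    hasFDerivAt_snd
  have h := ((ContinuousLinearMap.apply ℝ ℝ w0).hasFDerivAt.comp z
    ((hd.hasFDerivAt).comp z hsnd))
  have h2 : fderiv ℝ (fun z' : X7 => fderiv ℝ H (z'.2.1, z'.2.2) w0) z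
      = ((ContinuousLinearMap.apply ℝ ℝ w0).comp
          ((fderiv ℝ (fderiv ℝ H) z.2).comp (ContinuousLinearMap.snd ℝ ℝ _))) := h.fderiv
  rw [h2]; rfl

lemma hess_symm (H : Y6 → ℝ) (hH : ContDiff ℝ (⊤ : ℕ∞) H) (x v w : Y6) :
    fderiv ℝ (fderiv ℝ H) x v w = fderiv ℝ (fderiv ℝ H) x w v :=
  second_derivative_symmetric (fun y => (hH.differentiable (by simp) y).hasFDerivAt)
    (((hH.fderiv_right (m := (⊤ : ℕ∞)) (by simp)).differentiable (by simp) x).hasFDerivAt) v w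



/-- The magnetic-symplectic 2-form `F̃ = ω₀ + F` on `ℝ⁷ = ℝ_t × ℝ³_q × ℝ³_p`. -/
noncomputable def omF (e c : ℝ) (B E : ℝ → (Fin 3 → ℝ) → Fin 3 → ℝ)
    (z u w : ℝ × (Fin 3 → ℝ) × (Fin 3 → ℝ)) : ℝ :=
  (∑ j, (u.2.2 j * w.2.1 j - w.2.2 j * u.2.1 j))
    + (e/c) * ∑ j, B z.1 z.2.1 j *
        (u.2.1 (j + 1) * w.2.1 (j + 2) - u.2.1 (j + 2) * w.2.1 (j + 1))
    + e * ∑ j, E z.1 z.2.1 j * (u.2.1 j * w.1 - w.2.1 j * u.1)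

/-- The charged-particle dynamical vector field
`v_H = ∂/∂t + (∂H/∂p)∂/∂q + (eE - (e/c)B×(∂H/∂p) - ∂H/∂q)∂/∂p` on `ℝ⁷`. -/
noncomputable def vHfield (e c : ℝ) (B E : ℝ → (Fin 3 → ℝ) → Fin 3 → ℝ)
    (H : (Fin 3 → ℝ) × (Fin 3 → ℝ) → ℝ)
    (z : ℝ × (Fin 3 → ℝ) × (Fin 3 → ℝ)) : ℝ × (Fin 3 → ℝ) × (Fin 3 → ℝ) :=
  (1,
    fun j => fderiv ℝ H (z.2.1, z.2.2) (0, Pi.single j 1),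
    fun j => e * E z.1 z.2.1 j
      - (e/c) * (B z.1 z.2.1 (j + 1) * fderiv ℝ H (z.2.1, z.2.2) (0, Pi.single (j + 2) 1)
          - B z.1 z.2.1 (j + 2) * fderiv ℝ H (z.2.1, z.2.2) (0, Pi.single (j + 1) 1))
      - fderiv ℝ H (z.2.1, z.2.2) (Pi.single j 1, 0))

/-- `v₀(H) = eE·∂H/∂p` as a function on `ℝ⁷`. -/
noncomputable def v0H (e : ℝ) (E : ℝ → (Fin 3 → ℝ) → Fin 3 → ℝ)
    (H : (Fin 3 → ℝ) × (Fin 3 → ℝ) → ℝ) (z : ℝ × (Fin 3 → ℝ) × (Fin 3 → ℝ)) : ℝ :=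
  e * ∑ j, E z.1 z.2.1 j * fderiv ℝ H (z.2.1, z.2.2) (0, Pi.single j 1)

set_option maxHeartbeats 2000000 in
/-- For the charged-particle field `v_H` one has
`v_H ⌟ F̃ = dH - v₀(H) dt` (with `v⌟ω(u) = ω(u,v)`) and
`L_{v_H} F̃ = d(v₀(H)) ∧ dt` (Lie derivative in coordinates on constant vectors). -/
theorem vH_contraction_and_lie_derivative (e c : ℝ) (hc : c ≠ 0)
    (B E : ℝ → (Fin 3 → ℝ) → Fin 3 → ℝ)
    (hB : ∀ j, ContDiff ℝ (⊤ : ℕ∞) (fun p : ℝ × (Fin 3 → ℝ) => B p.1 p.2 j))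
    (hE : ∀ j, ContDiff ℝ (⊤ : ℕ∞) (fun p : ℝ × (Fin 3 → ℝ) => E p.1 p.2 j))
    (hdiv : ∀ (t : ℝ) (q : Fin 3 → ℝ),
      ∑ j, fderiv ℝ (fun q' => B t q' j) q (Pi.single j 1) = 0)
    (hfaraday : ∀ (t : ℝ) (q : Fin 3 → ℝ) (j : Fin 3),
      (1/c) * deriv (fun s => B s q j) t
        + (fderiv ℝ (fun q' => E t q' (j + 2)) q (Pi.single (j + 1) 1)
          - fderiv ℝ (fun q' => E t q' (j + 1)) q (Pi.single (j + 2) 1)) = 0)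
    (H : (Fin 3 → ℝ) × (Fin 3 → ℝ) → ℝ) (hH : ContDiff ℝ (⊤ : ℕ∞) H) :
    (∀ z u : ℝ × (Fin 3 → ℝ) × (Fin 3 → ℝ),
      omF e c B E z u (vHfield e c B E H z)
        = fderiv ℝ H (z.2.1, z.2.2) (u.2.1, u.2.2) - v0H e E H z * u.1) ∧
    (∀ z u w : ℝ × (Fin 3 → ℝ) × (Fin 3 → ℝ),
      fderiv ℝ (fun z' => omF e c B E z' u w) z (vHfield e c B E H z)
        + omF e c B E z (fderiv ℝ (vHfield e c B E H) z u) w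
        + omF e c B E z u (fderiv ℝ (vHfield e c B E H) z w)
        = fderiv ℝ (v0H e E H) z u * w.1 - fderiv ℝ (v0H e E H) z w * u.1) := by
  -- common differentiability facts
  have hBX : ∀ j, ContDiff ℝ (⊤ : ℕ∞) (fun z' : X7 => B z'.1 z'.2.1 j) := fun j =>
    (hB j).comp (contDiff_fst.prodMk (contDiff_fst.comp contDiff_snd))
  have hEX : ∀ j, ContDiff ℝ (⊤ : ℕ∞) (fun z' : X7 => E z'.1 z'.2.1 j) := fun j =>
    (hE j).comp (contDiff_fst.prodMk (contDiff_fst.comp contDiff_snd))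
  have hHp : ∀ (w0 : Y6), ContDiff ℝ (⊤ : ℕ∞) (fun z' : X7 => fderiv ℝ H (z'.2.1, z'.2.2) w0) :=
    fun w0 => (ContinuousLinearMap.apply ℝ ℝ w0).contDiff.comp
      ((hH.fderiv_right (by simp)).comp contDiff_snd)
  have hvH : ContDiff ℝ (⊤ : ℕ∞) (vHfield e c B E H) := by
    unfold vHfield
    exact ContDiff.prodMk contDiff_const (ContDiff.prodMk
      (contDiff_pi.mpr fun j => hHp _)
      (contDiff_pi.mpr fun j => ContDiff.sub (ContDiff.sub (contDiff_const.mul (hEX j))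
        (contDiff_const.mul (((hBX (j+1)).mul (hHp (0, Pi.single (j+2) 1))).sub
          ((hBX (j+2)).mul (hHp (0, Pi.single (j+1) 1))))))
        (hHp (Pi.single j 1, 0))))
  constructor
  · -- Part 1
    intro z u
    rw [clm_apply_pair (fderiv ℝ H (z.2.1, z.2.2)) u.2.1 u.2.2]
    simp only [omF, vHfield, v0H, Fin.sum_univ_three,
      show (0:Fin 3)+1 = 1 by decide, show (0:Fin 3)+2 = 2 by decide,
      show (1:Fin 3)+1 = 2 by decide, show (1:Fin 3)+2 = 0 by decide,
      show (2:Fin 3)+1 = 0 by decide, show (2:Fin 3)+2 = 1 by decide]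
    ring
  · -- Part 2
    intro z u w
    -- derivatives of the field components B, E on X7
    have hDB : ∀ (j : Fin 3) (v : X7), fderiv ℝ (fun z' : X7 => B z'.1 z'.2.1 j) z v
        = v.1 * deriv (fun s => B s z.2.1 j) z.1
          + ∑ k, v.2.1 k * fderiv ℝ (fun q' => B z.1 q' j) z.2.1 (Pi.single k 1) := by
      intro j v
      set ρ : X7 →L[ℝ] ℝ × (Fin 3 → ℝ) :=
        (ContinuousLinearMap.fst ℝ ℝ Y6).prod
          ((ContinuousLinearMap.fst ℝ (Fin 3 → ℝ) (Fin 3 → ℝ)).comp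
            (ContinuousLinearMap.snd ℝ ℝ Y6)) with hρ
      have h := (((hB j).differentiable (by simp) (z.1, z.2.1)).hasFDerivAt).comp z ρ.hasFDerivAt
      have h2 : fderiv ℝ (fun z' : X7 => B z'.1 z'.2.1 j) z
          = (fderiv ℝ (fun p : ℝ × (Fin 3 → ℝ) => B p.1 p.2 j) (z.1, z.2.1)).comp ρ := h.fderiv
      rw [h2]
      simp only [ContinuousLinearMap.comp_apply, hρ, ContinuousLinearMap.prod_apply,
        ContinuousLinearMap.coe_fst', ContinuousLinearMap.coe_comp', Function.comp_apply,
        ContinuousLinearMap.coe_snd']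
      exact fderiv_rpair_decomp _ (hB j) z.1 z.2.1 v.1 v.2.1
    have hDE : ∀ (j : Fin 3) (v : X7), fderiv ℝ (fun z' : X7 => E z'.1 z'.2.1 j) z v
        = v.1 * deriv (fun s => E s z.2.1 j) z.1
          + ∑ k, v.2.1 k * fderiv ℝ (fun q' => E z.1 q' j) z.2.1 (Pi.single k 1) := by
      intro j v
      set ρ : X7 →L[ℝ] ℝ × (Fin 3 → ℝ) :=
        (ContinuousLinearMap.fst ℝ ℝ Y6).prod
          ((ContinuousLinearMap.fst ℝ (Fin 3 → ℝ) (Fin 3 → ℝ)).comp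
            (ContinuousLinearMap.snd ℝ ℝ Y6)) with hρ
      have h := (((hE j).differentiable (by simp) (z.1, z.2.1)).hasFDerivAt).comp z ρ.hasFDerivAt
      have h2 : fderiv ℝ (fun z' : X7 => E z'.1 z'.2.1 j) z
          = (fderiv ℝ (fun p : ℝ × (Fin 3 → ℝ) => E p.1 p.2 j) (z.1, z.2.1)).comp ρ := h.fderiv
      rw [h2]
      simp only [ContinuousLinearMap.comp_apply, hρ, ContinuousLinearMap.prod_apply,
        ContinuousLinearMap.coe_fst', ContinuousLinearMap.coe_comp', Function.comp_apply,
        ContinuousLinearMap.coe_snd']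
      exact fderiv_rpair_decomp _ (hE j) z.1 z.2.1 v.1 v.2.1
    -- derivative of z' ↦ omF z' u w
    have hB' : ∀ k, HasFDerivAt (fun z' : X7 => B z'.1 z'.2.1 k)
        (fderiv ℝ (fun z' : X7 => B z'.1 z'.2.1 k) z) z := fun k =>
      ((hBX k).differentiable (by simp) z).hasFDerivAt
    have hE' : ∀ k, HasFDerivAt (fun z' : X7 => E z'.1 z'.2.1 k)
        (fderiv ℝ (fun z' : X7 => E z'.1 z'.2.1 k) z) z := fun k =>
      ((hEX k).differentiable (by simp) z).hasFDerivAt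
    have hHp' : ∀ (w0 : Y6), HasFDerivAt (fun z' : X7 => fderiv ℝ H (z'.2.1, z'.2.2) w0)
        (fderiv ℝ (fun z' : X7 => fderiv ℝ H (z'.2.1, z'.2.2) w0) z) z := fun w0 =>
      ((hHp w0).differentiable (by simp) z).hasFDerivAt
    have homF : ∀ v : X7, fderiv ℝ (fun z' => omF e c B E z' u w) z v
        = (e/c) * ∑ j, (u.2.1 (j + 1) * w.2.1 (j + 2) - u.2.1 (j + 2) * w.2.1 (j + 1))
              * (fderiv ℝ (fun z' : X7 => B z'.1 z'.2.1 j) z v)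
          + e * ∑ j, (u.2.1 j * w.1 - w.2.1 j * u.1)
              * (fderiv ℝ (fun z' : X7 => E z'.1 z'.2.1 j) z v) := by
      intro v
      have h1 : HasFDerivAt (fun z' : X7 => ∑ j, B z'.1 z'.2.1 j *
            (u.2.1 (j + 1) * w.2.1 (j + 2) - u.2.1 (j + 2) * w.2.1 (j + 1)))
          (∑ j, (u.2.1 (j + 1) * w.2.1 (j + 2) - u.2.1 (j + 2) * w.2.1 (j + 1))
              • fderiv ℝ (fun z' : X7 => B z'.1 z'.2.1 j) z) z :=
        HasFDerivAt.fun_sum fun j _ => (hB' j).mul_const _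
      have h2 : HasFDerivAt (fun z' : X7 => ∑ j, E z'.1 z'.2.1 j *
            (u.2.1 j * w.1 - w.2.1 j * u.1))
          (∑ j, (u.2.1 j * w.1 - w.2.1 j * u.1)
              • fderiv ℝ (fun z' : X7 => E z'.1 z'.2.1 j) z) z :=
        HasFDerivAt.fun_sum fun j _ => (hE' j).mul_const _
      have h0 : HasFDerivAt (fun z' => omF e c B E z' u w)
          ((0 + (e/c) • (∑ j, (u.2.1 (j + 1) * w.2.1 (j + 2) - u.2.1 (j + 2) * w.2.1 (j + 1))
              • fderiv ℝ (fun z' : X7 => B z'.1 z'.2.1 j) z))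
            + e • (∑ j, (u.2.1 j * w.1 - w.2.1 j * u.1)
              • fderiv ℝ (fun z' : X7 => E z'.1 z'.2.1 j) z)) z := by
        simp only [omF]
        exact ((hasFDerivAt_const _ z).add (h1.const_mul (e/c))).add (h2.const_mul e)
      rw [h0.fderiv]
      simp only [ContinuousLinearMap.add_apply, ContinuousLinearMap.zero_apply,
        ContinuousLinearMap.smul_apply, ContinuousLinearMap.coe_sum', Finset.sum_apply,
        smul_eq_mul, zero_add]
    -- components of the derivative of vHfield
    have hc1 : ∀ v : X7, (fderiv ℝ (vHfield e c B E H) z v).1 = 0 := by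
      intro v
      have hproj : fderiv ℝ (fun z' : X7 => (vHfield e c B E H z').1) z
          = (ContinuousLinearMap.fst ℝ ℝ Y6).comp (fderiv ℝ (vHfield e c B E H) z) :=
        ((ContinuousLinearMap.fst ℝ ℝ Y6).hasFDerivAt.comp z
          (hvH.differentiable (by simp) z).hasFDerivAt).fderiv
      have h1 : fderiv ℝ (fun z' : X7 => (vHfield e c B E H z').1) z
          = fderiv ℝ (fun _ : X7 => (1:ℝ)) z := rfl
      rw [show ((fderiv ℝ (vHfield e c B E H) z) v).1
          = ((ContinuousLinearMap.fst ℝ ℝ Y6).comp (fderiv ℝ (vHfield e c B E H) z)) v from rfl,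
        ← hproj, h1, fderiv_fun_const]
      simp
    have hc2 : ∀ (v : X7) (j : Fin 3), (fderiv ℝ (vHfield e c B E H) z v).2.1 j
        = fderiv ℝ (fderiv ℝ H) z.2 v.2 (0, Pi.single j 1) := by
      intro v j
      set φ : X7 →L[ℝ] ℝ := (ContinuousLinearMap.proj j).comp
        ((ContinuousLinearMap.fst ℝ (Fin 3 → ℝ) (Fin 3 → ℝ)).comp
          (ContinuousLinearMap.snd ℝ ℝ Y6)) with hφ
      have hproj : fderiv ℝ (fun z' : X7 => φ (vHfield e c B E H z')) z
          = φ.comp (fderiv ℝ (vHfield e c B E H) z) :=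
        (φ.hasFDerivAt.comp z (hvH.differentiable (by simp) z).hasFDerivAt).fderiv
      have h1 : fderiv ℝ (fun z' : X7 => φ (vHfield e c B E H z')) z
          = fderiv ℝ (fun z' : X7 => fderiv ℝ H (z'.2.1, z'.2.2) (0, Pi.single j 1)) z := rfl
      rw [show ((fderiv ℝ (vHfield e c B E H) z) v).2.1 j
          = (φ.comp (fderiv ℝ (vHfield e c B E H) z)) v from rfl,
        ← hproj, h1, fderiv_hess H hH _ z v]
    have hc3 : ∀ (v : X7) (j : Fin 3), (fderiv ℝ (vHfield e c B E H) z v).2.2 j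
        = e * (fderiv ℝ (fun z' : X7 => E z'.1 z'.2.1 j) z v)
          - (e/c) * ((fderiv ℝ (fun z' : X7 => B z'.1 z'.2.1 (j+1)) z v)
                * fderiv ℝ H (z.2.1, z.2.2) (0, Pi.single (j+2) 1)
              + B z.1 z.2.1 (j+1) * fderiv ℝ (fderiv ℝ H) z.2 v.2 (0, Pi.single (j+2) 1)
              - (fderiv ℝ (fun z' : X7 => B z'.1 z'.2.1 (j+2)) z v)
                * fderiv ℝ H (z.2.1, z.2.2) (0, Pi.single (j+1) 1)
              - B z.1 z.2.1 (j+2) * fderiv ℝ (fderiv ℝ H) z.2 v.2 (0, Pi.single (j+1) 1))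
          - fderiv ℝ (fderiv ℝ H) z.2 v.2 (Pi.single j 1, 0) := by
      intro v j
      set φ : X7 →L[ℝ] ℝ := (ContinuousLinearMap.proj j).comp
        ((ContinuousLinearMap.snd ℝ (Fin 3 → ℝ) (Fin 3 → ℝ)).comp
          (ContinuousLinearMap.snd ℝ ℝ Y6)) with hφ
      have hproj : fderiv ℝ (fun z' : X7 => φ (vHfield e c B E H z')) z
          = φ.comp (fderiv ℝ (vHfield e c B E H) z) :=
        (φ.hasFDerivAt.comp z (hvH.differentiable (by simp) z).hasFDerivAt).fderiv
      have hF3 : HasFDerivAt (fun z' : X7 => φ (vHfield e c B E H z'))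
          ((e • fderiv ℝ (fun z' : X7 => E z'.1 z'.2.1 j) z
            - (e/c) • ((B z.1 z.2.1 (j+1)
                  • fderiv ℝ (fun z' : X7 => fderiv ℝ H (z'.2.1, z'.2.2) (0, Pi.single (j+2) 1)) z
                + fderiv ℝ H (z.2.1, z.2.2) (0, Pi.single (j+2) 1)
                  • fderiv ℝ (fun z' : X7 => B z'.1 z'.2.1 (j+1)) z)
              - (B z.1 z.2.1 (j+2)
                  • fderiv ℝ (fun z' : X7 => fderiv ℝ H (z'.2.1, z'.2.2) (0, Pi.single (j+1) 1)) z
                + fderiv ℝ H (z.2.1, z.2.2) (0, Pi.single (j+1) 1)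
                  • fderiv ℝ (fun z' : X7 => B z'.1 z'.2.1 (j+2)) z)))
            - fderiv ℝ (fun z' : X7 => fderiv ℝ H (z'.2.1, z'.2.2) (Pi.single j 1, 0)) z) z :=
        ((((hE' j).const_mul e).sub
          (((((hB' (j+1)).mul (hHp' (0, Pi.single (j+2) 1))).sub
            ((hB' (j+2)).mul (hHp' (0, Pi.single (j+1) 1)))).const_mul (e/c)))).sub
          (hHp' (Pi.single j 1, 0)))
      rw [show ((fderiv ℝ (vHfield e c B E H) z) v).2.2 j
          = (φ.comp (fderiv ℝ (vHfield e c B E H) z)) v from rfl,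
        ← hproj, hF3.fderiv]
      simp only [ContinuousLinearMap.coe_sub', Pi.sub_apply, ContinuousLinearMap.add_apply,
        ContinuousLinearMap.smul_apply, smul_eq_mul, ContinuousLinearMap.coe_smul',
        Pi.smul_apply, fderiv_hess H hH _ z v]
      ring
    -- derivative of v0H
    have hV0 : ∀ v : X7, fderiv ℝ (v0H e E H) z v
        = e * ∑ j, ((fderiv ℝ (fun z' : X7 => E z'.1 z'.2.1 j) z v)
              * fderiv ℝ H (z.2.1, z.2.2) (0, Pi.single j 1)
            + E z.1 z.2.1 j * fderiv ℝ (fderiv ℝ H) z.2 v.2 (0, Pi.single j 1)) := by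
      intro v
      have h0 : HasFDerivAt (v0H e E H)
          (e • ∑ j, (E z.1 z.2.1 j
              • fderiv ℝ (fun z' : X7 => fderiv ℝ H (z'.2.1, z'.2.2) (0, Pi.single j 1)) z
            + fderiv ℝ H (z.2.1, z.2.2) (0, Pi.single j 1)
              • fderiv ℝ (fun z' : X7 => E z'.1 z'.2.1 j) z)) z := by
        unfold v0H
        exact (HasFDerivAt.fun_sum fun j _ =>
          (hE' j).mul (hHp' (0, Pi.single j 1))).const_mul e
      rw [h0.fderiv]
      simp only [ContinuousLinearMap.smul_apply, ContinuousLinearMap.coe_sum',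
        Finset.sum_apply, ContinuousLinearMap.add_apply, smul_eq_mul,
        fderiv_hess H hH _ z v]
      rw [Finset.mul_sum, Finset.mul_sum]
      exact Finset.sum_congr rfl fun j _ => by ring
    -- symmetry of the Hessian
    have hsE : ∑ j, u.2.1 j * fderiv ℝ (fderiv ℝ H) z.2 w.2 (Pi.single j 1, 0)
          + ∑ j, u.2.2 j * fderiv ℝ (fderiv ℝ H) z.2 w.2 (0, Pi.single j 1)
        = ∑ j, w.2.1 j * fderiv ℝ (fderiv ℝ H) z.2 u.2 (Pi.single j 1, 0)
          + ∑ j, w.2.2 j * fderiv ℝ (fderiv ℝ H) z.2 u.2 (0, Pi.single j 1) := by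
      rw [← clm_apply_pair (fderiv ℝ (fderiv ℝ H) z.2 w.2) u.2.1 u.2.2,
        ← clm_apply_pair (fderiv ℝ (fderiv ℝ H) z.2 u.2) w.2.1 w.2.2]
      exact hess_symm H hH z.2 w.2 u.2
    -- specialize the field equations
    have hdiv' := hdiv z.1 z.2.1
    have hfar0 := hfaraday z.1 z.2.1 0
    have hfar1 := hfaraday z.1 z.2.1 1
    have hfar2 := hfaraday z.1 z.2.1 2
    simp only [Fin.sum_univ_three,
      show (0:Fin 3)+1 = 1 by decide, show (0:Fin 3)+2 = 2 by decide,
      show (1:Fin 3)+1 = 2 by decide, show (1:Fin 3)+2 = 0 by decide,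
      show (2:Fin 3)+1 = 0 by decide, show (2:Fin 3)+2 = 1 by decide] at hdiv' hfar0 hfar1 hfar2 hsE
    -- rewrite the goal
    rw [homF (vHfield e c B E H z), hV0 u, hV0 w]
    simp only [omF]
    simp only [hc1, hc2, hc3]
    simp only [hDB, hDE]
    simp only [vHfield]
    simp only [Fin.sum_univ_three, Prod.mk.eta,
      show (0:Fin 3)+1 = 1 by decide, show (0:Fin 3)+2 = 2 by decide,
      show (1:Fin 3)+1 = 2 by decide, show (1:Fin 3)+2 = 0 by decide,
      show (2:Fin 3)+1 = 0 by decide, show (2:Fin 3)+2 = 1 by decide]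
    linear_combination
      (e * ((u.2.1 1 * w.2.1 2 - u.2.1 2 * w.2.1 1)
        - u.1 * (fderiv ℝ H z.2 (0, Pi.single 1 1) * w.2.1 2
            - fderiv ℝ H z.2 (0, Pi.single 2 1) * w.2.1 1)
        + w.1 * (fderiv ℝ H z.2 (0, Pi.single 1 1) * u.2.1 2
            - fderiv ℝ H z.2 (0, Pi.single 2 1) * u.2.1 1))) * hfar0
      + (e * ((u.2.1 2 * w.2.1 0 - u.2.1 0 * w.2.1 2)
        - u.1 * (fderiv ℝ H z.2 (0, Pi.single 2 1) * w.2.1 0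
            - fderiv ℝ H z.2 (0, Pi.single 0 1) * w.2.1 2)
        + w.1 * (fderiv ℝ H z.2 (0, Pi.single 2 1) * u.2.1 0
            - fderiv ℝ H z.2 (0, Pi.single 0 1) * u.2.1 2))) * hfar1
      + (e * ((u.2.1 0 * w.2.1 1 - u.2.1 1 * w.2.1 0)
        - u.1 * (fderiv ℝ H z.2 (0, Pi.single 0 1) * w.2.1 1
            - fderiv ℝ H z.2 (0, Pi.single 1 1) * w.2.1 0)
        + w.1 * (fderiv ℝ H z.2 (0, Pi.single 0 1) * u.2.1 1
            - fderiv ℝ H z.2 (0, Pi.single 1 1) * u.2.1 0))) * hfar2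
      + ((e/c) * (fderiv ℝ H z.2 (0, Pi.single 0 1) * (u.2.1 1 * w.2.1 2 - u.2.1 2 * w.2.1 1)
        + fderiv ℝ H z.2 (0, Pi.single 1 1) * (u.2.1 2 * w.2.1 0 - u.2.1 0 * w.2.1 2)
        + fderiv ℝ H z.2 (0, Pi.single 2 1) * (u.2.1 0 * w.2.1 1 - u.2.1 1 * w.2.1 0))) * hdiv'
      + hsE
end
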